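/- arXiv:2405.02689 — 12 statements merged into one kernel-verified Lean document; each statement's English description precedes it below -/
import Mathlib

section
/- Let n ≥ p ≥ r > 0 be integers. Every affine subspace of the space of n×p real matrices in which every element has rank exactly r has dimension at most r(r−1)/2 + r(n−r), and there exists an affine subspace of n×p real matrices of dimension exactly r(r−1)/2 + r(n−r) in which every element has rank exactly r. -/
/-!
Move a point of the affine subspace to the normal form `[[1, 0], [0, 0]]` (identity block
`r × r`) and write an element of the direction `W` as `w = [[a, b], [c, d]]`. Every
`[[1, 0], [0, 0]] + t • w` has rank `r`, so its bordered `(r + 1)`-minors vanish for all real `t`;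
dividing out powers of `t` and letting `t → 0` gives `d = 0` and `c b = 0`, and by polarization
`c(w') b(w) = 0` whenever `c(w) = 0`. If `V` is spanned by the columns of these `b(w)`, every
`c`-block vanishes on `V`, so the `c`-blocks and these `b`-blocks together have dimension at most
`(n - r)(r - dim V) + (p - r) dim V ≤ r (n - r)`. The remaining elements have `b = c = d = 0`, and
such an element with symmetric `a` is `0`: `1 + t • a` is invertible for all real `t` only if the
symmetric matrix `a` has no nonzero eigenvalue. So they inject into the skew-symmetric `r × r`
matrices, of dimension `r (r - 1) / 2`. The matrices `[[1 + N, 0], [C, 0]]` with `N` strictly upper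
triangular attain the bound.
-/

open Matrix Module

section FinrankBounds

variable {K M N P : Type*} [Field K] [AddCommGroup M] [Module K M] [AddCommGroup N] [Module K N]
  [AddCommGroup P] [Module K P]

theorem Submodule.finrank_map_add_finrank_inf_ker [FiniteDimensional K M] (S : Submodule K M)
    (f : M →ₗ[K] N) :
    finrank K (S.map f) + finrank K ↥(S ⊓ LinearMap.ker f) = finrank K S := by
  rw [← (f.domRestrict S).finrank_range_add_finrank_ker, LinearMap.range_domRestrict,
    LinearMap.ker_domRestrict, ← Submodule.finrank_map_subtype_eq, Submodule.map_comap_subtype]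

variable [FiniteDimensional K M] [FiniteDimensional K N] [FiniteDimensional K P]

theorem Submodule.finrank_le_of_forall_range_le (B : Submodule K (M →ₗ[K] N))
    (V : Submodule K N) (hB : ∀ β ∈ B, LinearMap.range β ≤ V) :
    finrank K B ≤ finrank K M * finrank K V := by
  have hle : B ≤ LinearMap.range (LinearMap.llcomp K M V N V.subtype) := fun β hβ =>
    ⟨LinearMap.codRestrict V β fun x => hB β hβ ⟨x, rfl⟩, LinearMap.ext fun _ => rfl⟩
  calc finrank K B ≤ finrank K (LinearMap.range (LinearMap.llcomp K M V N V.subtype)) :=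
        Submodule.finrank_mono hle
    _ ≤ finrank K (M →ₗ[K] V) := LinearMap.finrank_range_le _
    _ = finrank K M * finrank K V := finrank_linearMap K K M V

theorem Submodule.finrank_add_le_of_forall_le_ker (C : Submodule K (N →ₗ[K] P))
    (V : Submodule K N) (hC : ∀ γ ∈ C, V ≤ LinearMap.ker γ) :
    finrank K C + finrank K P * finrank K V ≤ finrank K P * finrank K N := by
  obtain ⟨V', hV'⟩ := V.exists_isCompl
  have hinj : Function.Injective (LinearMap.domRestrict' V' ∘ₗ C.subtype) := by
    rw [← LinearMap.ker_eq_bot, LinearMap.ker_eq_bot']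
    rintro ⟨γ, hγ⟩ h0
    have hV'γ : V' ≤ LinearMap.ker γ := fun x hx => LinearMap.congr_fun h0 ⟨x, hx⟩
    have : LinearMap.ker γ = ⊤ := top_le_iff.1 (hV'.sup_eq_top ▸ sup_le (hC γ hγ) hV'γ)
    exact Subtype.ext (LinearMap.ker_eq_top.1 this)
  have hC_le := LinearMap.finrank_le_finrank_of_injective hinj
  have hV_add := Submodule.finrank_add_eq_of_isCompl hV'
  rw [finrank_linearMap] at hC_le
  nlinarith

theorem Submodule.finrank_add_finrank_le_of_comp_eq_zero (C : Submodule K (N →ₗ[K] P))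
    (B : Submodule K (M →ₗ[K] N)) (hCB : ∀ γ ∈ C, ∀ β ∈ B, γ ∘ₗ β = 0)
    (hMP : finrank K M ≤ finrank K P) :
    finrank K C + finrank K B ≤ finrank K P * finrank K N := by
  set V := ⨆ β ∈ B, LinearMap.range β
  have hB := B.finrank_le_of_forall_range_le V fun β hβ =>
    le_iSup₂ (f := fun β (_ : β ∈ B) => LinearMap.range β) β hβ
  have hC := C.finrank_add_le_of_forall_le_ker V fun γ hγ =>
    iSup₂_le fun β hβ => LinearMap.range_le_ker_iff.2 (hCB γ hγ β hβ)
  have : finrank K M * finrank K V ≤ finrank K P * finrank K V := Nat.mul_le_mul_right _ hMP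
  omega

end FinrankBounds

section Rank

variable {K : Type*} [Field K]

theorem Matrix.det_eq_zero_of_rank_lt {n : Type*} [Fintype n] [DecidableEq n]
    {A : Matrix n n K} (h : A.rank < Fintype.card n) : A.det = 0 := by
  by_contra hA
  exact h.ne (rank_of_det_ne_zero hA)

theorem Matrix.isUnit_of_rank_eq_card {n : Type*} [Fintype n] [DecidableEq n]
    {A : Matrix n n K} (h : A.rank = Fintype.card n) : IsUnit A := by
  refine mulVec_surjective_iff_isUnit.1 ((LinearMap.range_eq_top (f := A.mulVecLin)).1 ?_)
  exact Submodule.eq_top_of_finrank_eq (by rw [finrank_fintype_fun_eq_card]; exact h)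

variable {ι μ κ : Type*} [Fintype ι] [Fintype κ]

theorem Matrix.rank_fromBlocks_zero₁₂_zero₂₂_of_isUnit [DecidableEq ι] {X : Matrix ι ι K}
    (hX : IsUnit X) (C : Matrix μ ι K) :
    (fromBlocks X 0 C 0 : Matrix (ι ⊕ μ) (ι ⊕ κ) K).rank = Fintype.card ι := by
  refine le_antisymm ?_ ?_
  · have : (fromBlocks X 0 C 0 : Matrix (ι ⊕ μ) (ι ⊕ κ) K) =
        fromRows X C * fromCols 1 (0 : Matrix ι κ K) := by
      rw [fromRows_mul_fromCols]; simp
    rw [this]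
    exact (rank_mul_le_left _ _).trans (rank_le_card_width _)
  · calc Fintype.card ι = X.rank := (rank_of_isUnit X hX).symm
      _ ≤ _ := rank_submatrix_le (fromBlocks X 0 C 0 : Matrix (ι ⊕ μ) (ι ⊕ κ) K) Sum.inl Sum.inl

theorem Matrix.rank_fromBlocks_zero₁₂_zero₂₁_zero₂₂_le (X : Matrix ι ι K) :
    (fromBlocks X 0 0 0 : Matrix (ι ⊕ μ) (ι ⊕ κ) K).rank ≤ X.rank := by
  classical
  have : (fromBlocks X 0 0 0 : Matrix (ι ⊕ μ) (ι ⊕ κ) K) =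
      fromRows 1 (0 : Matrix μ ι K) * X * fromCols 1 (0 : Matrix ι κ K) := by
    rw [fromRows_mul, fromRows_mul_fromCols]; simp
  rw [this]
  exact (rank_mul_le_left _ _).trans (rank_mul_le_right _ _)

end Rank

section NormalForm

variable {K : Type*} [Field K]

theorem LinearMap.exists_basis_toMatrix_eq_fromBlocks {V W : Type*} [AddCommGroup V]
    [Module K V] [AddCommGroup W] [Module K W] [FiniteDimensional K V] [FiniteDimensional K W]
    {r p n : ℕ} (f : V →ₗ[K] W) (hr : finrank K (range f) = r) (hp : finrank K V = p)
    (hn : finrank K W = n) :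
    ∃ (bV : Basis (Fin r ⊕ Fin (p - r)) K V) (bW : Basis (Fin r ⊕ Fin (n - r)) K W),
      toMatrix bV bW f = fromBlocks 1 0 0 0 := by
  obtain ⟨E, hE⟩ := (ker f).exists_isCompl
  obtain ⟨F, hF⟩ := (range f).exists_isCompl
  let eE : E ≃ₗ[K] range f :=
    (Submodule.quotientEquivOfIsCompl _ _ hE).symm.trans f.quotKerEquivRange
  have heE (x : E) : (eE x : W) = f x := by simp [eE]
  have hrank := f.finrank_range_add_finrank_ker
  have hF_add := Submodule.finrank_add_eq_of_isCompl hF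
  let bE : Basis (Fin r) K E := finBasisOfFinrankEq K E (eE.finrank_eq.trans hr)
  let bK : Basis (Fin (p - r)) K (ker f) := finBasisOfFinrankEq K _ (by omega)
  let bF : Basis (Fin (n - r)) K F := finBasisOfFinrankEq K F (by omega)
  let bV := (bE.prod bK).map (Submodule.prodEquivOfIsCompl E (ker f) hE.symm)
  let bW := ((bE.map eE).prod bF).map (Submodule.prodEquivOfIsCompl (range f) F hF)
  have hf_inl (i : Fin r) : f (bV (Sum.inl i)) = bW (Sum.inl i) := by simp [bV, bW, heE]
  have hf_inr (j : Fin (p - r)) : f (bV (Sum.inr j)) = 0 := by simp [bV]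
  refine ⟨bV, bW, ?_⟩
  ext i (j | j)
  · rw [toMatrix_apply, hf_inl, Basis.repr_self]
    rcases i with i | i <;> simp [Finsupp.single_apply, one_apply, eq_comm]
  · rw [toMatrix_apply, hf_inr]
    rcases i with i | i <;> simp

theorem Matrix.exists_rank_preserving_linearEquiv_eq_fromBlocks {n p r : ℕ}
    (A : Matrix (Fin n) (Fin p) K) (hA : A.rank = r) :
    ∃ Φ : Matrix (Fin n) (Fin p) K ≃ₗ[K] Matrix (Fin r ⊕ Fin (n - r)) (Fin r ⊕ Fin (p - r)) K,
      (∀ X, (Φ X).rank = X.rank) ∧ Φ A = fromBlocks 1 0 0 0 := by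
  obtain ⟨bV, bW, hAb⟩ :=
    (toLin' A).exists_basis_toMatrix_eq_fromBlocks (p := p) (n := n) hA (by simp) (by simp)
  refine ⟨toLin'.trans (LinearMap.toMatrix bV bW), fun X => ?_, hAb⟩
  rw [rank_eq_finrank_range_toLin _ bW bV, LinearEquiv.trans_apply, toLin_toMatrix]
  rfl

end NormalForm

section BorderedMinors

variable {n : Type*} [Fintype n] [DecidableEq n]

theorem Matrix.det_fromBlocks_smul_bottom {R : Type*} [CommRing R] (t : R) (A : Matrix n n R)
    (B : Matrix n Unit R) (C : Matrix Unit n R) (D : Matrix Unit Unit R) :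
    (fromBlocks A B (t • C) (t • D)).det = t * (fromBlocks A B C D).det := by
  have : fromBlocks A B (t • C) (t • D) = fromBlocks 1 0 0 (t • 1) * fromBlocks A B C D := by
    simp [fromBlocks_multiply]
  rw [this, det_mul]
  simp

theorem Matrix.det_fromBlocks_smul_right {R : Type*} [CommRing R] (t : R) (A : Matrix n n R)
    (B : Matrix n Unit R) (C : Matrix Unit n R) :
    (fromBlocks A (t • B) C 0).det = t * (fromBlocks A B C 0).det := by
  have : fromBlocks A (t • B) C 0 = fromBlocks A B C 0 * fromBlocks 1 0 0 (t • 1) := by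
    simp [fromBlocks_multiply]
  rw [this, det_mul, mul_comm]
  simp

theorem det_eq_zero_at_zero_of_continuous {f : ℝ → Matrix n n ℝ} (hf : Continuous f)
    (h : ∀ t ≠ 0, (f t).det = 0) : (f 0).det = 0 :=
  congr_fun (Continuous.ext_on (dense_compl_singleton 0) (g := 0) hf.matrix_det
    continuous_const h) 0

/-- Dividing the last row (and then the last column) by `t` and letting `t → 0` leaves the
determinants `det [[1, 0], [v, δ]] = δ` and `det [[1, u], [v, 0]] = -v u`. -/
theorem Matrix.eq_zero_and_mul_eq_zero_of_det_fromBlocks_eq_zero (a : Matrix n n ℝ)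
    (u : Matrix n Unit ℝ) (v : Matrix Unit n ℝ) (δ : Matrix Unit Unit ℝ)
    (h : ∀ t : ℝ, (fromBlocks (1 + t • a) (t • u) (t • v) (t • δ)).det = 0) :
    δ = 0 ∧ v * u = 0 := by
  have hδ : δ = 0 := by
    have := det_eq_zero_at_zero_of_continuous (f := fun t => fromBlocks (1 + t • a) (t • u) v δ)
      (by fun_prop) fun t ht => by simpa [det_fromBlocks_smul_bottom, ht] using h t
    ext ⟨⟩ ⟨⟩
    simpa [det_fromBlocks_one₁₁] using this
  subst hδ
  refine ⟨rfl, ?_⟩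
  have := det_eq_zero_at_zero_of_continuous (f := fun t => fromBlocks (1 + t • a) u v 0)
    (by fun_prop) fun t ht => by
      have := h t
      rw [det_fromBlocks_smul_bottom, det_fromBlocks_smul_right] at this
      simpa [ht] using this
  ext ⟨⟩ ⟨⟩
  simpa [det_fromBlocks_one₁₁] using this

theorem Matrix.toBlocks₂₂_eq_zero_and_mul_eq_zero_of_rank_le {ι μ κ : Type*} [Fintype ι]
    [DecidableEq ι] [Fintype κ] (w : Matrix (ι ⊕ μ) (ι ⊕ κ) ℝ)
    (h : ∀ t : ℝ, (fromBlocks 1 0 0 0 + t • w).rank ≤ Fintype.card ι) :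
    w.toBlocks₂₂ = 0 ∧ w.toBlocks₂₁ * w.toBlocks₁₂ = 0 := by
  have key (i : μ) (j : κ) : (of fun _ _ => w.toBlocks₂₂ i j : Matrix Unit Unit ℝ) = 0 ∧
      replicateRow Unit (w.toBlocks₂₁ i) * replicateCol Unit (fun l => w.toBlocks₁₂ l j) = 0 := by
    refine eq_zero_and_mul_eq_zero_of_det_fromBlocks_eq_zero w.toBlocks₁₁ _ _ _ fun t => ?_
    have hsub : (fromBlocks 1 0 0 0 + t • w).submatrix (Sum.map id fun _ => i)
        (Sum.map id fun _ => j) = fromBlocks (1 + t • w.toBlocks₁₁)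
          (t • replicateCol Unit (fun l => w.toBlocks₁₂ l j))
          (t • replicateRow Unit (w.toBlocks₂₁ i)) (t • of fun _ _ => w.toBlocks₂₂ i j) := by
      ext (k | k) (l | l) <;> simp [toBlocks₁₁, toBlocks₁₂, toBlocks₂₁, toBlocks₂₂, one_apply]
    refine det_eq_zero_of_rank_lt (hsub ▸ ?_)
    calc _ ≤ (fromBlocks 1 0 0 0 + t • w).rank := rank_submatrix_le _ _ _
      _ ≤ Fintype.card ι := h t
      _ < Fintype.card (ι ⊕ Unit) := by simp
  constructor
  · ext i j
    simpa using congr_fun₂ (key i j).1 () ()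
  · ext i j
    simpa [mul_apply, dotProduct] using congr_fun₂ (key i j).2 () ()

end BorderedMinors

theorem Matrix.IsHermitian.eq_zero_of_forall_isUnit_one_add_smul {n : Type*} [Fintype n]
    [DecidableEq n] {s : Matrix n n ℝ} (hs : s.IsHermitian) (h : ∀ t : ℝ, IsUnit (1 + t • s)) :
    s = 0 := by
  by_contra hne
  obtain ⟨v, μ, hμ, hv, hsv⟩ := hs.exists_eigenvector_of_ne_zero hne
  have : (1 + (-μ⁻¹) • s) *ᵥ v = 0 := by
    rw [add_mulVec, one_mulVec, smul_mulVec, hsv, smul_smul, neg_mul, inv_mul_cancel₀ hμ]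
    simp
  exact hv (mulVec_injective_iff_isUnit.2 (h _) (this.trans (mulVec_zero _).symm))

section StrictPairs

variable {K : Type*} [Field K] {r : ℕ}

theorem Fin.card_subtype_fst_lt_snd :
    Fintype.card {q : Fin r × Fin r // q.1 < q.2} = r * (r - 1) / 2 := by
  rw [Fintype.card_subtype, Fintype.card_product_filter_lt, Fintype.card_fin,
    Nat.choose_two_right]

def Matrix.skewCoords :
    Matrix (Fin r) (Fin r) K →ₗ[K] ({q : Fin r × Fin r // q.1 < q.2} → K) where
  toFun a q := a q.1.1 q.1.2 - a q.1.2 q.1.1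
  map_add' a b := by ext; simp; ring
  map_smul' c a := by ext; simp; ring

theorem Matrix.isSymm_of_skewCoords_eq_zero {a : Matrix (Fin r) (Fin r) K}
    (h : skewCoords a = 0) : a.IsSymm := by
  have hlt (i j : Fin r) (hij : i < j) : a i j = a j i :=
    sub_eq_zero.1 (congr_fun h ⟨(i, j), hij⟩)
  ext i j
  rcases lt_trichotomy i j with hij | rfl | hji
  · exact (hlt i j hij).symm
  · rfl
  · exact hlt j i hji

def Matrix.ofStrictUpper :
    ({q : Fin r × Fin r // q.1 < q.2} → K) →ₗ[K] Matrix (Fin r) (Fin r) K where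
  toFun y := of fun i j => if h : i < j then y ⟨(i, j), h⟩ else 0
  map_add' y z := by ext i j; by_cases h : i < j <;> simp [h]
  map_smul' c y := by ext i j; by_cases h : i < j <;> simp [h]

theorem Matrix.ofStrictUpper_injective :
    Function.Injective (ofStrictUpper : ({q : Fin r × Fin r // q.1 < q.2} → K) → _) := by
  intro y z h
  ext ⟨⟨i, j⟩, hij⟩
  simpa [ofStrictUpper, hij] using congr_fun₂ h i j

theorem Matrix.isUnit_one_add_ofStrictUpper (y : {q : Fin r × Fin r // q.1 < q.2} → K) :
    IsUnit (1 + ofStrictUpper y) := by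
  have htri : (1 + ofStrictUpper y).IsUpperTriangular := fun i j (hji : j < i) => by
    simp [ofStrictUpper, hji.ne', hji.not_gt]
  rw [isUnit_iff_isUnit_det, det_of_isUpperTriangular htri]
  simp [ofStrictUpper]

end StrictPairs

section UpperBound

variable {K ι μ κ : Type*} [Field K]

def Matrix.toBlocks₁₁LinearMap : Matrix (ι ⊕ μ) (ι ⊕ κ) K →ₗ[K] Matrix ι ι K where
  toFun := toBlocks₁₁
  map_add' _ _ := rfl
  map_smul' _ _ := rfl

def Matrix.toBlocks₁₂LinearMap : Matrix (ι ⊕ μ) (ι ⊕ κ) K →ₗ[K] Matrix ι κ K where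
  toFun := toBlocks₁₂
  map_add' _ _ := rfl
  map_smul' _ _ := rfl

def Matrix.toBlocks₂₁LinearMap : Matrix (ι ⊕ μ) (ι ⊕ κ) K →ₗ[K] Matrix μ ι K where
  toFun := toBlocks₂₁
  map_add' _ _ := rfl
  map_smul' _ _ := rfl

theorem eq_zero_of_forall_rank_fromBlocks_one_add_smul [Fintype ι] [DecidableEq ι] [Fintype κ]
    {w : Matrix (ι ⊕ μ) (ι ⊕ κ) ℝ}
    (h : ∀ t : ℝ, (fromBlocks 1 0 0 0 + t • w).rank = Fintype.card ι)
    (hc : w.toBlocks₂₁ = 0) (hb : w.toBlocks₁₂ = 0) (ha : w.toBlocks₁₁.IsSymm) : w = 0 := by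
  have hd := (toBlocks₂₂_eq_zero_and_mul_eq_zero_of_rank_le w fun t => (h t).le).1
  have hw : w = fromBlocks w.toBlocks₁₁ 0 0 0 := by
    rw [← hb, ← hc, ← hd, fromBlocks_toBlocks]
  have hunit (t : ℝ) : IsUnit (1 + t • w.toBlocks₁₁) := by
    refine isUnit_of_rank_eq_card (le_antisymm (rank_le_card_width _) ?_)
    calc Fintype.card ι = (fromBlocks (1 + t • w.toBlocks₁₁) 0 0 0 :
          Matrix (ι ⊕ μ) (ι ⊕ κ) ℝ).rank := by
          rw [← h t, hw]
          simp [fromBlocks_smul, fromBlocks_add]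
      _ ≤ _ := rank_fromBlocks_zero₁₂_zero₂₁_zero₂₂_le _
  rw [hw, (isHermitian_iff_isSymm.2 ha).eq_zero_of_forall_isUnit_one_add_smul hunit,
    fromBlocks_zero]

theorem finrank_le_of_forall_rank_fromBlocks_one_add {r m k : ℕ} (hkm : k ≤ m)
    (W : Submodule ℝ (Matrix (Fin r ⊕ Fin m) (Fin r ⊕ Fin k) ℝ))
    (hW : ∀ w ∈ W, (fromBlocks 1 0 0 0 + w).rank = r) :
    finrank ℝ W ≤ r * (r - 1) / 2 + r * m := by
  have hline (w) (hw : w ∈ W) := toBlocks₂₂_eq_zero_and_mul_eq_zero_of_rank_le w fun t => by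
    simpa using (hW _ (W.smul_mem t hw)).le
  set Wc := W ⊓ LinearMap.ker toBlocks₂₁LinearMap
  set Wcb := Wc ⊓ LinearMap.ker toBlocks₁₂LinearMap
  have hCB : ∀ γ ∈ (W.map toBlocks₂₁LinearMap).map toLin'.toLinearMap,
      ∀ β ∈ (Wc.map toBlocks₁₂LinearMap).map toLin'.toLinearMap, γ ∘ₗ β = 0 := by
    rintro _ ⟨_, ⟨w', hw', rfl⟩, rfl⟩ _ ⟨_, ⟨w, ⟨hw, hc : toBlocks₂₁LinearMap w = 0⟩, rfl⟩, rfl⟩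
    have h : toBlocks₂₁LinearMap (w + w') * toBlocks₁₂LinearMap (w + w') = 0 :=
      (hline _ (W.add_mem hw hw')).2
    have h' : toBlocks₂₁LinearMap w' * toBlocks₁₂LinearMap w' = 0 := (hline _ hw').2
    rw [map_add, map_add, hc, zero_add, Matrix.mul_add, h', add_zero] at h
    rw [LinearEquiv.coe_coe, LinearEquiv.coe_coe, ← toLin'_mul, h, map_zero]
  have hskew : finrank ℝ Wcb ≤ r * (r - 1) / 2 := by
    have hbot : Wcb ⊓ LinearMap.ker (skewCoords ∘ₗ toBlocks₁₁LinearMap) = ⊥ := by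
      rw [eq_bot_iff]
      rintro w ⟨⟨⟨hw, hc⟩, hb⟩, ha⟩
      exact eq_zero_of_forall_rank_fromBlocks_one_add_smul
        (fun t => by simpa using hW _ (W.smul_mem t hw)) hc hb (isSymm_of_skewCoords_eq_zero ha)
    have := Wcb.finrank_map_add_finrank_inf_ker (skewCoords ∘ₗ toBlocks₁₁LinearMap)
    rw [hbot, finrank_bot, add_zero] at this
    rw [← this, ← Fin.card_subtype_fst_lt_snd, ← finrank_fintype_fun_eq_card ℝ]
    exact Submodule.finrank_le _
  have hCB_le := Submodule.finrank_add_finrank_le_of_comp_eq_zero _ _ hCB (by simpa using hkm)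
  have hW_split : finrank ℝ (W.map toBlocks₂₁LinearMap) + finrank ℝ Wc = finrank ℝ W :=
    W.finrank_map_add_finrank_inf_ker _
  have hWc_split : finrank ℝ (Wc.map toBlocks₁₂LinearMap) + finrank ℝ Wcb = finrank ℝ Wc :=
    Wc.finrank_map_add_finrank_inf_ker _
  simp only [LinearEquiv.finrank_map_eq, finrank_fin_fun] at hCB_le
  rw [mul_comm r m]
  omega

end UpperBound

theorem finrank_le_of_forall_rank_add_eq {n p r : ℕ} (hpn : p ≤ n)
    (W : Submodule ℝ (Matrix (Fin n) (Fin p) ℝ)) (A : Matrix (Fin n) (Fin p) ℝ)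
    (hW : ∀ w ∈ W, (A + w).rank = r) :
    finrank ℝ W ≤ r * (r - 1) / 2 + r * (n - r) := by
  obtain ⟨Φ, hΦ, hΦA⟩ :=
    exists_rank_preserving_linearEquiv_eq_fromBlocks A (by simpa using hW 0 W.zero_mem)
  rw [← LinearEquiv.finrank_map_eq Φ]
  refine finrank_le_of_forall_rank_fromBlocks_one_add (by omega) _ ?_
  rintro _ ⟨w, hw, rfl⟩
  rw [← hΦA, LinearEquiv.coe_coe, ← map_add, hΦ, hW w hw]

section Construction

variable {K : Type*} [Field K]

theorem exists_affineSubspace_fromBlocks_forall_rank_eq (r m k : ℕ) :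
    ∃ S : AffineSubspace K (Matrix (Fin r ⊕ Fin m) (Fin r ⊕ Fin k) K),
      (S : Set (Matrix (Fin r ⊕ Fin m) (Fin r ⊕ Fin k) K)).Nonempty ∧ (∀ M ∈ S, M.rank = r) ∧
      finrank K S.direction = r * (r - 1) / 2 + r * m := by
  let embed : (({q : Fin r × Fin r // q.1 < q.2} → K) × Matrix (Fin m) (Fin r) K) →ₗ[K]
      Matrix (Fin r ⊕ Fin m) (Fin r ⊕ Fin k) K :=
    { toFun z := fromBlocks (ofStrictUpper z.1) 0 z.2 0
      map_add' z z' := by simp [fromBlocks_add]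
      map_smul' c z := by simp [fromBlocks_smul] }
  have hinj : Function.Injective embed := fun z z' h => by
    obtain ⟨h₁, -, h₂, -⟩ := fromBlocks_inj.1 h
    exact Prod.ext (ofStrictUpper_injective h₁) h₂
  refine ⟨AffineSubspace.mk' (fromBlocks 1 0 0 0) (LinearMap.range embed),
    ⟨_, AffineSubspace.self_mem_mk' _ _⟩, ?_, ?_⟩
  · intro M hM
    obtain ⟨z, hz⟩ := AffineSubspace.mem_mk'.1 hM
    rw [vsub_eq_sub, eq_sub_iff_add_eq'] at hz
    rw [← hz]
    simpa [embed, fromBlocks_add] using rank_fromBlocks_zero₁₂_zero₂₂_of_isUnit (κ := Fin k)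
      (isUnit_one_add_ofStrictUpper z.1) z.2
  · rw [AffineSubspace.direction_mk', LinearMap.finrank_range_of_inj hinj]
    simp [Fin.card_subtype_fst_lt_snd, finrank_matrix, mul_comm]

theorem exists_affineSubspace_forall_rank_eq {n p r : ℕ} (hrp : r ≤ p) (hpn : p ≤ n) :
    ∃ S : AffineSubspace K (Matrix (Fin n) (Fin p) K),
      (S : Set (Matrix (Fin n) (Fin p) K)).Nonempty ∧ (∀ M ∈ S, M.rank = r) ∧
      finrank K S.direction = r * (r - 1) / 2 + r * (n - r) := by
  obtain ⟨S, ⟨M₀, hM₀⟩, hrank, hdim⟩ :=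
    exists_affineSubspace_fromBlocks_forall_rank_eq (K := K) r (n - r) (p - r)
  let e := reindexLinearEquiv K K (finSumFinEquiv.trans (finCongr (by omega : r + (n - r) = n)))
    (finSumFinEquiv.trans (finCongr (by omega : r + (p - r) = p)))
  refine ⟨S.map e.toLinearMap.toAffineMap, ⟨e M₀, M₀, hM₀, rfl⟩, ?_, ?_⟩
  · rintro _ ⟨M, hM, rfl⟩
    exact (rank_reindex _ _ M).trans (hrank M hM)
  · rw [AffineSubspace.map_direction, LinearMap.toAffineMap_linear, LinearEquiv.finrank_map_eq,
      hdim]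

end Construction

theorem stmt_0_general (n p r : ℕ) (hrp : r ≤ p) (hpn : p ≤ n) :
    (∀ S : AffineSubspace ℝ (Matrix (Fin n) (Fin p) ℝ),
        (S : Set (Matrix (Fin n) (Fin p) ℝ)).Nonempty →
        (∀ M ∈ S, M.rank = r) →
        Module.finrank ℝ S.direction ≤ r * (r - 1) / 2 + r * (n - r)) ∧
      ∃ S : AffineSubspace ℝ (Matrix (Fin n) (Fin p) ℝ),
        (S : Set (Matrix (Fin n) (Fin p) ℝ)).Nonempty ∧
        (∀ M ∈ S, M.rank = r) ∧
        Module.finrank ℝ S.direction = r * (r - 1) / 2 + r * (n - r) := by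
  refine ⟨fun S ⟨A, hA⟩ hS => finrank_le_of_forall_rank_add_eq hpn S.direction A fun w hw => ?_,
    exists_affineSubspace_forall_rank_eq hrp hpn⟩
  rw [add_comm]
  exact hS _ (AffineSubspace.vadd_mem_of_mem_direction hw hA)

/-- For integers n ≥ p ≥ r > 0, every affine subspace of n×p real
matrices in which every element has rank exactly r has dimension at most
r(r-1)/2 + r(n-r), and this bound is attained. -/
theorem stmt_0 (n p r : ℕ) (hrp : r ≤ p) (hpn : p ≤ n) (hr : 0 < r) :
    (∀ S : AffineSubspace ℝ (Matrix (Fin n) (Fin p) ℝ),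
        (S : Set (Matrix (Fin n) (Fin p) ℝ)).Nonempty →
        (∀ M ∈ S, M.rank = r) →
        Module.finrank ℝ S.direction ≤ r * (r - 1) / 2 + r * (n - r)) ∧
      ∃ S : AffineSubspace ℝ (Matrix (Fin n) (Fin p) ℝ),
        (S : Set (Matrix (Fin n) (Fin p) ℝ)).Nonempty ∧
        (∀ M ∈ S, M.rank = r) ∧
        Module.finrank ℝ S.direction = r * (r - 1) / 2 + r * (n - r) :=
  stmt_0_general n p r hrp hpn
end

section
/- Let F be a field, n ≥ p ≥ r > 0 be integers, and W be an optimal affine subspace of r×r matrices over F. Then W̃^(n,p) is an affine subspace of n×p matrices over F in which every element has rank exactly r, and its dimension equals r(r−1)/2 + r(n−r). -/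
/-!
An element `[[w, 0], [B, 0]]` of `W̃` has only `r` nonzero columns, while its top-left block `w`
is invertible and so already has rank `r`; hence its rank is exactly `r`. As a set, `W̃` is the
intersection of the subspace of matrices supported on the first `r` columns with the preimage of
`W` under the top-left block map, i.e. the affine subspace through `[[w₀, 0], [0, 0]]` with
direction `{[[u, 0], [B, 0]] | u ∈ W.direction}` ≅ `W.direction × F^((n - r) × r)`.
-/

/-- An affine subspace of s×s matrices is *optimal* if it is nonempty, all its
elements are invertible, and its dimension equals s(s-1)/2. -/
def IsOptimal {F : Type} [Field F] {s : ℕ}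
    (W : AffineSubspace F (Matrix (Fin s) (Fin s) F)) : Prop :=
  (W : Set (Matrix (Fin s) (Fin s) F)).Nonempty ∧
    (∀ M ∈ W, IsUnit M) ∧
    Module.finrank F W.direction = s * (s - 1) / 2

/-- Given a set W of r×r matrices and n ≥ p ≥ r, the set of n×p block matrices
[[W, 0], [B, 0]] with W ∈ W and B an arbitrary (n-r)×r matrix. -/
def tildeNP {F : Type} [Field F] {r n p : ℕ} (hrn : r ≤ n) (hrp : r ≤ p)
    (W : Set (Matrix (Fin r) (Fin r) F)) : Set (Matrix (Fin n) (Fin p) F) :=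
  {M | (∀ (i : Fin n) (j : Fin p), r ≤ (j : ℕ) → M i j = 0) ∧
    (Matrix.of fun (i j : Fin r) => M (Fin.castLE hrn i) (Fin.castLE hrp j)) ∈ W}

namespace Matrix

theorem rank_le_card_of_col_eq_zero {R m n k : Type*} [CommRing R] [StrongRankCondition R]
    [Fintype n] [Fintype k] (A : Matrix m n R) (c : k → n)
    (hA : ∀ j ∉ Set.range c, ∀ i, A i j = 0) : A.rank ≤ Fintype.card k := by
  have hcols : Set.range A.col ⊆ insert 0 (Set.range (A.col ∘ c)) := by
    rintro _ ⟨j, rfl⟩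
    by_cases hj : j ∈ Set.range c
    · obtain ⟨l, rfl⟩ := hj
      exact Or.inr ⟨l, rfl⟩
    · exact Or.inl (funext fun i => hA j hj i)
  have := Module.Finite.span_of_finite R (Set.finite_range (A.col ∘ c))
  rw [rank_eq_finrank_span_cols]
  calc Module.finrank R (Submodule.span R (Set.range A.col))
      ≤ Module.finrank R (Submodule.span R (Set.range (A.col ∘ c))) := by
        apply Submodule.finrank_mono
        rw [← Submodule.span_insert_zero (s := Set.range (A.col ∘ c))]
        exact Submodule.span_mono hcols
    _ ≤ Fintype.card k := finrank_range_le_card _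

theorem rank_eq_card_of_isUnit_submatrix {R m n k : Type*} [CommRing R] [StrongRankCondition R]
    [Fintype n] [Fintype k] [DecidableEq k] (A : Matrix m n R) (rc : k → m) (c : k → n)
    (hA : ∀ j ∉ Set.range c, ∀ i, A i j = 0) (hunit : IsUnit (A.submatrix rc c)) :
    A.rank = Fintype.card k :=
  le_antisymm (rank_le_card_of_col_eq_zero A c hA)
    ((rank_of_isUnit _ hunit).symm.le.trans (rank_submatrix_le A rc c))

end Matrix

theorem AffineSubspace.coe_mk'_inf_comap {k V₁ V₂ : Type*} [Ring k] [AddCommGroup V₁]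
    [Module k V₁] [AddCommGroup V₂] [Module k V₂] (f : V₁ →ₗ[k] V₂) (Z : Submodule k V₁)
    (W : AffineSubspace k V₂) {v : V₁} (hvZ : v ∈ Z) (hvW : f v ∈ W) :
    (mk' v (Z ⊓ W.direction.comap f) : Set V₁) = (Z : Set V₁) ∩ f ⁻¹' W := by
  ext M
  rw [SetLike.mem_coe, mem_mk', vsub_eq_sub, Submodule.mem_inf, Submodule.mem_comap, map_sub,
    Z.sub_mem_iff_left hvZ, ← vsub_eq_sub, vsub_right_mem_direction_iff_mem hvW]
  rfl

section LeftBlocks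

variable (R : Type*) [Semiring R] {n p r : ℕ}

def firstColsSubmodule (n p r : ℕ) : Submodule R (Matrix (Fin n) (Fin p) R) where
  carrier := {M | ∀ i (j : Fin p), r ≤ (j : ℕ) → M i j = 0}
  add_mem' hA hB i j hj := by simp [hA i j hj, hB i j hj]
  zero_mem' _ _ _ := rfl
  smul_mem' c _ hA i j hj := by simp [hA i j hj]

@[simps]
def topLeftBlock (hrn : r ≤ n) (hrp : r ≤ p) :
    Matrix (Fin n) (Fin p) R →ₗ[R] Matrix (Fin r) (Fin r) R where
  toFun M := M.submatrix (Fin.castLE hrn) (Fin.castLE hrp)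
  map_add' _ _ := rfl
  map_smul' _ _ := rfl

@[simps]
def bottomLeftBlock (hrp : r ≤ p) :
    Matrix (Fin n) (Fin p) R →ₗ[R] Matrix (Fin (n - r)) (Fin r) R where
  toFun M := M.submatrix (fun i => ⟨r + i, by omega⟩) (Fin.castLE hrp)
  map_add' _ _ := rfl
  map_smul' _ _ := rfl

/-- The block matrix `[[A, 0], [B, 0]]`. -/
@[simps]
def fromLeftBlocks :
    Matrix (Fin r) (Fin r) R × Matrix (Fin (n - r)) (Fin r) R →ₗ[R] Matrix (Fin n) (Fin p) R where
  toFun x := Matrix.of fun i j =>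
    if hj : (j : ℕ) < r then
      if hi : (i : ℕ) < r then x.1 ⟨i, hi⟩ ⟨j, hj⟩ else x.2 ⟨i - r, by omega⟩ ⟨j, hj⟩
    else 0
  map_add' x y := by
    ext i j
    by_cases hj : (j : ℕ) < r <;> by_cases hi : (i : ℕ) < r <;> simp [hi, hj]
  map_smul' c x := by
    ext i j
    by_cases hj : (j : ℕ) < r <;> by_cases hi : (i : ℕ) < r <;> simp [hi, hj]

variable {R}

theorem fromLeftBlocks_mem_firstColsSubmodule
    (x : Matrix (Fin r) (Fin r) R × Matrix (Fin (n - r)) (Fin r) R) :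
    fromLeftBlocks R x ∈ firstColsSubmodule R n p r :=
  fun _ _ hj => dif_neg (Nat.not_lt.mpr hj)

theorem topLeftBlock_fromLeftBlocks (hrn : r ≤ n) (hrp : r ≤ p)
    (x : Matrix (Fin r) (Fin r) R × Matrix (Fin (n - r)) (Fin r) R) :
    topLeftBlock R hrn hrp (fromLeftBlocks R x) = x.1 := by
  ext i j
  simp

theorem bottomLeftBlock_fromLeftBlocks (hrp : r ≤ p)
    (x : Matrix (Fin r) (Fin r) R × Matrix (Fin (n - r)) (Fin r) R) :
    bottomLeftBlock R hrp (fromLeftBlocks R x) = x.2 := by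
  ext i j
  simp

theorem fromLeftBlocks_topLeftBlock_bottomLeftBlock (hrn : r ≤ n) (hrp : r ≤ p)
    {M : Matrix (Fin n) (Fin p) R} (hM : M ∈ firstColsSubmodule R n p r) :
    fromLeftBlocks R (topLeftBlock R hrn hrp M, bottomLeftBlock R hrp M) = M := by
  ext i j
  by_cases hj : (j : ℕ) < r
  · by_cases hi : (i : ℕ) < r
    · simp [hi, hj]
    · simp only [fromLeftBlocks_apply, bottomLeftBlock_apply, Matrix.of_apply,
        Matrix.submatrix_apply, hi, hj, dite_true, dite_false]
      congr 1
      exact Fin.ext (Nat.add_sub_cancel' (not_lt.1 hi))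
  · exact (dif_neg hj).trans (hM i j (Nat.le_of_not_lt hj)).symm

theorem fromLeftBlocks_injective (hrn : r ≤ n) (hrp : r ≤ p) :
    Function.Injective (fromLeftBlocks R (n := n) (p := p) (r := r)) := fun x y h =>
  Prod.ext
    (by rw [← topLeftBlock_fromLeftBlocks hrn hrp x, h, topLeftBlock_fromLeftBlocks])
    (by rw [← bottomLeftBlock_fromLeftBlocks hrp x, h, bottomLeftBlock_fromLeftBlocks])

theorem range_fromLeftBlocks_comp_prodMap (hrn : r ≤ n) (hrp : r ≤ p)
    (U : Submodule R (Matrix (Fin r) (Fin r) R)) :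
    LinearMap.range ((fromLeftBlocks R).comp (U.subtype.prodMap LinearMap.id)) =
      firstColsSubmodule R n p r ⊓ U.comap (topLeftBlock R hrn hrp) := by
  ext M
  constructor
  · rintro ⟨⟨u, B⟩, rfl⟩
    refine ⟨fromLeftBlocks_mem_firstColsSubmodule _, ?_⟩
    change topLeftBlock R hrn hrp (fromLeftBlocks R ((u : Matrix _ _ R), B)) ∈ U
    rw [topLeftBlock_fromLeftBlocks]
    exact u.2
  · rintro ⟨hM, hU⟩
    exact ⟨(⟨_, hU⟩, bottomLeftBlock R hrp M),
      fromLeftBlocks_topLeftBlock_bottomLeftBlock hrn hrp hM⟩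

theorem finrank_firstColsSubmodule_inf_comap {F : Type*} [Field F] (hrn : r ≤ n) (hrp : r ≤ p)
    (U : Submodule F (Matrix (Fin r) (Fin r) F)) :
    Module.finrank F ↥(firstColsSubmodule F n p r ⊓ U.comap (topLeftBlock F hrn hrp)) =
      Module.finrank F U + r * (n - r) := by
  have hinj : Function.Injective ((fromLeftBlocks F).comp (U.subtype.prodMap LinearMap.id)) :=
    (fromLeftBlocks_injective hrn hrp).comp
      (Prod.map_injective.2 ⟨U.injective_subtype, fun _ _ => id⟩)
  rw [← range_fromLeftBlocks_comp_prodMap hrn hrp, LinearMap.finrank_range_of_inj hinj,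
    Module.finrank_prod, Module.finrank_matrix, Module.finrank_self, Fintype.card_fin,
    Fintype.card_fin, mul_one, mul_comm]

end LeftBlocks

theorem stmt_2_general (F : Type) [Field F] (n p r : ℕ) (hrp : r ≤ p) (hpn : p ≤ n)
    (W : AffineSubspace F (Matrix (Fin r) (Fin r) F)) (hW : IsOptimal W) :
    ∃ S : AffineSubspace F (Matrix (Fin n) (Fin p) F),
      (S : Set (Matrix (Fin n) (Fin p) F))
          = tildeNP (le_trans hrp hpn) hrp (W : Set (Matrix (Fin r) (Fin r) F)) ∧
      (S : Set (Matrix (Fin n) (Fin p) F)).Nonempty ∧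
      (∀ M ∈ S, M.rank = r) ∧
      Module.finrank F S.direction = r * (r - 1) / 2 + r * (n - r) := by
  obtain ⟨⟨w₀, hw₀⟩, hunit, hdim⟩ := hW
  have hrn := le_trans hrp hpn
  set v₀ : Matrix (Fin n) (Fin p) F := fromLeftBlocks F (w₀, 0)
  have hv₀W : topLeftBlock F hrn hrp v₀ ∈ W := by rwa [topLeftBlock_fromLeftBlocks]
  have hS := AffineSubspace.coe_mk'_inf_comap (topLeftBlock F hrn hrp) _ W
    (fromLeftBlocks_mem_firstColsSubmodule (w₀, 0)) hv₀W
  refine ⟨_, hS, ⟨v₀, AffineSubspace.self_mem_mk' _ _⟩, fun M hM => ?_, ?_⟩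
  · obtain ⟨hMZ, hMW⟩ := hS ▸ (SetLike.mem_coe.2 hM)
    have hcols : ∀ j ∉ Set.range (Fin.castLE hrp), ∀ i, M i j = 0 := fun j hj i =>
      hMZ i j (not_lt.1 fun hjr => hj ⟨⟨j, hjr⟩, rfl⟩)
    simpa using M.rank_eq_card_of_isUnit_submatrix _ _ hcols (hunit _ hMW)
  · rw [AffineSubspace.direction_mk', finrank_firstColsSubmodule_inf_comap, hdim]

/-- If W is an optimal affine subspace of r×r matrices over F and
n ≥ p ≥ r > 0, then W̃^(n,p) is an affine subspace of n×p matrices in which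
every element has rank exactly r, of dimension r(r-1)/2 + r(n-r). -/
theorem stmt_2 (F : Type) [Field F] (n p r : ℕ) (hrp : r ≤ p) (hpn : p ≤ n) (hr : 0 < r)
    (W : AffineSubspace F (Matrix (Fin r) (Fin r) F)) (hW : IsOptimal W) :
    ∃ S : AffineSubspace F (Matrix (Fin n) (Fin p) F),
      (S : Set (Matrix (Fin n) (Fin p) F))
          = tildeNP (le_trans hrp hpn) hrp (W : Set (Matrix (Fin r) (Fin r) F)) ∧
      (S : Set (Matrix (Fin n) (Fin p) F)).Nonempty ∧
      (∀ M ∈ S, M.rank = r) ∧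
      Module.finrank F S.direction = r * (r - 1) / 2 + r * (n - r) :=
  stmt_2_general F n p r hrp hpn W hW
end

section
/- Let F be a field, n ≥ p ≥ r > 0 be integers, r = s + t with s ≥ 0 and t ≥ 0, and let M and N be optimal affine subspaces of t×t and s×s matrices over F respectively. Then M ∧_{n,p} N is an affine subspace of n×p matrices over F in which every element has rank exactly r, and its dimension equals st + s(s−1)/2 + t(t−1)/2 + s(p−r) + (n−r)t = r(r−1)/2 + s(p−r) + (n−r)t. -/
/-- Given sets M of t×t matrices and N of s×s matrices, and n ≥ p ≥ s + t,
the set M ∧_{n,p} N of n×p matrices with block structure (row sizes s, t, n-s-t;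
column sizes t, s, p-s-t) of the form [[?, N, ?], [M, 0, 0], [?, 0, 0]]. -/
def wedge {F : Type} [Field F] {n p s t : ℕ} (hn : s + t ≤ n) (hp : s + t ≤ p)
    (M : Set (Matrix (Fin t) (Fin t) F)) (N : Set (Matrix (Fin s) (Fin s) F)) :
    Set (Matrix (Fin n) (Fin p) F) :=
  {X | (∀ (i : Fin n) (j : Fin p), s ≤ (i : ℕ) → t ≤ (j : ℕ) → X i j = 0) ∧
    (Matrix.of fun (a b : Fin t) =>
      X ⟨s + ↑a, by have := a.isLt; omega⟩ ⟨↑b, by have := b.isLt; omega⟩) ∈ M ∧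
    (Matrix.of fun (a b : Fin s) =>
      X ⟨↑a, by have := a.isLt; omega⟩ ⟨t + ↑b, by have := b.isLt; omega⟩) ∈ N}

namespace Stmt3Aux

variable {F : Type} [Field F] {n p s t : ℕ}




abbrev PM (F : Type) [Field F] (n p s t : ℕ) : Type :=
  Matrix (Fin t) (Fin t) F × Matrix (Fin s) (Fin s) F × Matrix (Fin s) (Fin t) F ×
    Matrix (Fin s) (Fin (p - (s + t))) F × Matrix (Fin (n - (s + t))) (Fin t) F

def phiFun (hn : s + t ≤ n) (hp : s + t ≤ p) (v : PM F n p s t) :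
    Matrix (Fin n) (Fin p) F :=
  Matrix.of fun i j =>
    if hi : (i : ℕ) < s then
      if hj : (j : ℕ) < t then v.2.2.1 ⟨i, hi⟩ ⟨j, hj⟩
      else if hj2 : (j : ℕ) < t + s then v.2.1 ⟨i, hi⟩ ⟨(j : ℕ) - t, by omega⟩
      else v.2.2.2.1 ⟨i, hi⟩ ⟨(j : ℕ) - (s + t), by have := j.isLt; omega⟩
    else if hi2 : (i : ℕ) < s + t then
      (if hj : (j : ℕ) < t then v.1 ⟨(i : ℕ) - s, by omega⟩ ⟨j, hj⟩ else 0)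
    else
      (if hj : (j : ℕ) < t then v.2.2.2.2 ⟨(i : ℕ) - (s + t), by have := i.isLt; omega⟩ ⟨j, hj⟩ else 0)

lemma phiFun_add (hn : s + t ≤ n) (hp : s + t ≤ p) (v w : PM F n p s t) :
    phiFun hn hp (v + w) = phiFun hn hp v + phiFun hn hp w := by
  ext i j
  simp only [phiFun, Matrix.of_apply, Matrix.add_apply, Prod.fst_add, Prod.snd_add]
  split_ifs <;> simp [Matrix.add_apply]

lemma phiFun_smul (hn : s + t ≤ n) (hp : s + t ≤ p) (c : F) (v : PM F n p s t) :
    phiFun hn hp (c • v) = c • phiFun hn hp v := by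
  ext i j
  simp only [phiFun, Matrix.of_apply, Matrix.smul_apply, Prod.smul_fst, Prod.smul_snd]
  split_ifs <;> simp [Matrix.smul_apply]

def phi (hn : s + t ≤ n) (hp : s + t ≤ p) : PM F n p s t →ₗ[F] Matrix (Fin n) (Fin p) F where
  toFun := phiFun hn hp
  map_add' := phiFun_add hn hp
  map_smul' := phiFun_smul hn hp

def blkM (hn : s + t ≤ n) (hp : s + t ≤ p) (X : Matrix (Fin n) (Fin p) F) :
    Matrix (Fin t) (Fin t) F :=
  Matrix.of fun (a b : Fin t) =>
    X ⟨s + ↑a, by have := a.isLt; omega⟩ ⟨↑b, by have := b.isLt; omega⟩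

def blkN (hn : s + t ≤ n) (hp : s + t ≤ p) (X : Matrix (Fin n) (Fin p) F) :
    Matrix (Fin s) (Fin s) F :=
  Matrix.of fun (a b : Fin s) =>
    X ⟨↑a, by have := a.isLt; omega⟩ ⟨t + ↑b, by have := b.isLt; omega⟩

def blkA (hn : s + t ≤ n) (hp : s + t ≤ p) (X : Matrix (Fin n) (Fin p) F) :
    Matrix (Fin s) (Fin t) F :=
  Matrix.of fun a b =>
    X ⟨↑a, by have := a.isLt; omega⟩ ⟨↑b, by have := b.isLt; omega⟩

def blkB (hn : s + t ≤ n) (hp : s + t ≤ p) (X : Matrix (Fin n) (Fin p) F) :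
    Matrix (Fin s) (Fin (p - (s + t))) F :=
  Matrix.of fun a b =>
    X ⟨↑a, by have := a.isLt; omega⟩ ⟨s + t + ↑b, by have := b.isLt; omega⟩

def blkC (hn : s + t ≤ n) (hp : s + t ≤ p) (X : Matrix (Fin n) (Fin p) F) :
    Matrix (Fin (n - (s + t))) (Fin t) F :=
  Matrix.of fun a b =>
    X ⟨s + t + ↑a, by have := a.isLt; omega⟩ ⟨↑b, by have := b.isLt; omega⟩

lemma phiFun_zero_cond (hn : s + t ≤ n) (hp : s + t ≤ p) (v : PM F n p s t)
    (i : Fin n) (j : Fin p) (hi : s ≤ (i : ℕ)) (hj : t ≤ (j : ℕ)) :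
    phiFun hn hp v i j = 0 := by
  simp only [phiFun, Matrix.of_apply]
  split_ifs <;> first | rfl | omega

lemma blkM_phiFun (hn : s + t ≤ n) (hp : s + t ≤ p) (v : PM F n p s t) :
    blkM hn hp (phiFun hn hp v) = v.1 := by
  ext a b
  simp only [blkM, phiFun, Matrix.of_apply]
  rw [dif_neg (by omega), dif_pos (by omega : s + (a:ℕ) < s + t), dif_pos b.isLt]
  exact congrArg₂ v.1 (Fin.ext (show s + (a:ℕ) - s = (a:ℕ) by omega)) (Fin.ext rfl)

lemma blkN_phiFun (hn : s + t ≤ n) (hp : s + t ≤ p) (v : PM F n p s t) :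
    blkN hn hp (phiFun hn hp v) = v.2.1 := by
  ext a b
  simp only [blkN, phiFun, Matrix.of_apply]
  rw [dif_pos a.isLt, dif_neg (by omega), dif_pos (by have := b.isLt; omega : t + (b:ℕ) < t + s)]
  exact congrArg₂ v.2.1 (Fin.ext rfl) (Fin.ext (show t + (b:ℕ) - t = (b:ℕ) by omega))

lemma blkA_phiFun (hn : s + t ≤ n) (hp : s + t ≤ p) (v : PM F n p s t) :
    blkA hn hp (phiFun hn hp v) = v.2.2.1 := by
  ext a b
  simp only [blkA, phiFun, Matrix.of_apply]
  rw [dif_pos a.isLt, dif_pos b.isLt]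

lemma blkB_phiFun (hn : s + t ≤ n) (hp : s + t ≤ p) (v : PM F n p s t) :
    blkB hn hp (phiFun hn hp v) = v.2.2.2.1 := by
  ext a b
  simp only [blkB, phiFun, Matrix.of_apply]
  rw [dif_pos a.isLt, dif_neg (by omega), dif_neg (by omega)]
  exact congrArg₂ v.2.2.2.1 (Fin.ext rfl) (Fin.ext (show s + t + (b:ℕ) - (s + t) = (b:ℕ) by omega))

lemma blkC_phiFun (hn : s + t ≤ n) (hp : s + t ≤ p) (v : PM F n p s t) :
    blkC hn hp (phiFun hn hp v) = v.2.2.2.2 := by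
  ext a b
  simp only [blkC, phiFun, Matrix.of_apply]
  rw [dif_neg (by omega), dif_neg (by omega), dif_pos b.isLt]
  exact congrArg₂ v.2.2.2.2 (Fin.ext (show s + t + (a:ℕ) - (s + t) = (a:ℕ) by omega)) (Fin.ext rfl)

lemma phi_injective (hn : s + t ≤ n) (hp : s + t ≤ p) :
    Function.Injective (phi (F := F) hn hp) := by
  intro v w h
  have h1 := congrArg (blkM hn hp) h
  have h2 := congrArg (blkN hn hp) h
  have h3 := congrArg (blkA hn hp) h
  have h4 := congrArg (blkB hn hp) h
  have h5 := congrArg (blkC hn hp) h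
  simp only [phi, LinearMap.coe_mk, AddHom.coe_mk, blkM_phiFun, blkN_phiFun, blkA_phiFun,
    blkB_phiFun, blkC_phiFun] at h1 h2 h3 h4 h5
  exact Prod.ext h1 (Prod.ext h2 (Prod.ext h3 (Prod.ext h4 h5)))

lemma phiFun_blocks (hn : s + t ≤ n) (hp : s + t ≤ p) (X : Matrix (Fin n) (Fin p) F)
    (hX : ∀ (i : Fin n) (j : Fin p), s ≤ (i : ℕ) → t ≤ (j : ℕ) → X i j = 0) :
    phiFun hn hp (blkM hn hp X, blkN hn hp X, blkA hn hp X, blkB hn hp X, blkC hn hp X) = X := by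
  ext i j
  simp only [phiFun, Matrix.of_apply, blkM, blkN, blkA, blkB, blkC]
  split_ifs with h1 h2 h3 h4 h5 h6 h7
  · exact congrArg₂ X (Fin.ext rfl) (Fin.ext rfl)
  · exact congrArg₂ X (Fin.ext rfl) (Fin.ext (by simp; omega))
  · exact congrArg₂ X (Fin.ext rfl) (Fin.ext (by simp; omega))
  · exact congrArg₂ X (Fin.ext (by simp; omega)) (Fin.ext rfl)
  · exact (hX i j (by omega) (by omega)).symm
  · exact congrArg₂ X (Fin.ext (by simp; omega)) (Fin.ext rfl)
  · exact (hX i j (by omega) (by omega)).symm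




lemma rank_le_aux (hn : s + t ≤ n) (hp : s + t ≤ p) (X : Matrix (Fin n) (Fin p) F)
    (hX : ∀ (i : Fin n) (j : Fin p), s ≤ (i : ℕ) → t ≤ (j : ℕ) → X i j = 0) :
    X.rank ≤ s + t := by
  classical
  set U : Matrix (Fin n) (Fin t ⊕ Fin s) F := Matrix.of fun i c =>
    Sum.elim (fun b : Fin t => if (i : ℕ) < s then 0 else X i ⟨(b : ℕ), by have := b.isLt; omega⟩)
      (fun a : Fin s => if (i : ℕ) = (a : ℕ) then (1 : F) else 0) c with hU
  set V : Matrix (Fin t ⊕ Fin s) (Fin p) F := Matrix.of fun c j =>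
    Sum.elim (fun b : Fin t => if (j : ℕ) = (b : ℕ) then (1 : F) else 0)
      (fun a : Fin s => X ⟨(a : ℕ), by have := a.isLt; omega⟩ j) c with hV
  have hXUV : X = U * V := by
    ext i j
    rw [Matrix.mul_apply, Fintype.sum_sum_type]
    by_cases hi : (i : ℕ) < s
    · have h1 : ∀ b : Fin t, U i (Sum.inl b) * V (Sum.inl b) j = 0 := by
        intro b; simp [hU, hV, hi]
      rw [Finset.sum_congr rfl (fun b _ => h1 b), Finset.sum_const_zero, zero_add]
      rw [Finset.sum_eq_single (⟨(i : ℕ), hi⟩ : Fin s)]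
      · simp [hU, hV]
      · intro a _ hne
        have : (i : ℕ) ≠ (a : ℕ) := fun h => hne (Fin.ext h.symm)
        simp [hU, this]
      · intro h; exact absurd (Finset.mem_univ _) h
    · have h2 : ∀ a : Fin s, U i (Sum.inr a) * V (Sum.inr a) j = 0 := by
        intro a
        have : (i : ℕ) ≠ (a : ℕ) := by have := a.isLt; omega
        simp [hU, this]
      rw [Finset.sum_congr rfl (fun a _ => h2 a), Finset.sum_const_zero, add_zero]
      by_cases hj : (j : ℕ) < t
      · rw [Finset.sum_eq_single (⟨(j : ℕ), hj⟩ : Fin t)]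
        · simp [hU, hV, hi]
        · intro b _ hne
          have : (j : ℕ) ≠ (b : ℕ) := fun h => hne (Fin.ext h.symm)
          simp [hV, this]
        · intro h; exact absurd (Finset.mem_univ _) h
      · have h3 : ∀ b : Fin t, U i (Sum.inl b) * V (Sum.inl b) j = 0 := by
          intro b
          have : (j : ℕ) ≠ (b : ℕ) := by have := b.isLt; omega
          simp [hV, this]
        rw [Finset.sum_congr rfl (fun b _ => h3 b), Finset.sum_const_zero]
        exact hX i j (by omega) (by omega)
  calc X.rank = (U * V).rank := by rw [← hXUV]
    _ ≤ U.rank := Matrix.rank_mul_le_left U V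
    _ ≤ Fintype.card (Fin t ⊕ Fin s) := Matrix.rank_le_card_width U
    _ = s + t := by simp [add_comm]

lemma rank_ge_aux (hn : s + t ≤ n) (hp : s + t ≤ p) (X : Matrix (Fin n) (Fin p) F)
    (hX : ∀ (i : Fin n) (j : Fin p), s ≤ (i : ℕ) → t ≤ (j : ℕ) → X i j = 0)
    (hMu : IsUnit (Matrix.of fun (a b : Fin t) =>
      X ⟨s + ↑a, by have := a.isLt; omega⟩ ⟨↑b, by have := b.isLt; omega⟩))
    (hNu : IsUnit (Matrix.of fun (a b : Fin s) =>
      X ⟨↑a, by have := a.isLt; omega⟩ ⟨t + ↑b, by have := b.isLt; omega⟩)) :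
    s + t ≤ X.rank := by
  classical
  set Mm : Matrix (Fin t) (Fin t) F := Matrix.of fun (a b : Fin t) =>
      X ⟨s + ↑a, by have := a.isLt; omega⟩ ⟨↑b, by have := b.isLt; omega⟩ with hMm
  set Nm : Matrix (Fin s) (Fin s) F := Matrix.of fun (a b : Fin s) =>
      X ⟨↑a, by have := a.isLt; omega⟩ ⟨t + ↑b, by have := b.isLt; omega⟩ with hNm
  set Am : Matrix (Fin s) (Fin t) F := Matrix.of fun (a : Fin s) (b : Fin t) =>
      X ⟨↑a, by have := a.isLt; omega⟩ ⟨↑b, by have := b.isLt; omega⟩ with hAm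
  -- selection matrices
  set f : Fin s ⊕ Fin t → Fin n := Sum.elim (fun a => ⟨(a : ℕ), by have := a.isLt; omega⟩)
    (fun b => ⟨s + (b : ℕ), by have := b.isLt; omega⟩) with hf
  set g : Fin s ⊕ Fin t → Fin p := Sum.elim (fun a => ⟨t + (a : ℕ), by have := a.isLt; omega⟩)
    (fun b => ⟨(b : ℕ), by have := b.isLt; omega⟩) with hg
  set P : Matrix (Fin s ⊕ Fin t) (Fin n) F := Matrix.of fun a k => if k = f a then 1 else 0 with hP
  set Q : Matrix (Fin p) (Fin s ⊕ Fin t) F := Matrix.of fun k b => if k = g b then 1 else 0 with hQ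
  have hPX : ∀ a l, (P * X) a l = X (f a) l := by
    intro a l
    rw [Matrix.mul_apply]
    simp [hP, ite_mul, Finset.sum_ite_eq]
  have hPXQ : ∀ a b, (P * X * Q) a b = X (f a) (g b) := by
    intro a b
    rw [Matrix.mul_apply]
    simp only [hPX]
    simp [hQ, mul_ite, Finset.sum_ite_eq']
  have hblock : P * X * Q = Matrix.fromBlocks Nm Am 0 Mm := by
    ext a b
    rw [hPXQ]
    rcases a with a | a <;> rcases b with b | b <;>
      simp only [hf, hg, Sum.elim_inl, Sum.elim_inr, Matrix.fromBlocks_apply₁₁,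
        Matrix.fromBlocks_apply₁₂, Matrix.fromBlocks_apply₂₁, Matrix.fromBlocks_apply₂₂,
        hAm, hNm, hMm, Matrix.of_apply, Matrix.zero_apply] <;>
      first
        | rfl
        | exact hX _ _ (show s ≤ s + _ by omega) (show t ≤ t + _ by omega)
  obtain ⟨iM⟩ := hMu.nonempty_invertible
  obtain ⟨iN⟩ := hNu.nonempty_invertible
  have hunit : IsUnit (Matrix.fromBlocks Nm Am 0 Mm) := by
    letI := Matrix.fromBlocksZero₂₁Invertible Nm Am Mm
    exact isUnit_of_invertible _
  have hrank : (Matrix.fromBlocks Nm Am 0 Mm).rank = s + t := by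
    rw [Matrix.rank_of_isUnit _ hunit]
    simp
  calc s + t = (P * X * Q).rank := by rw [hblock, hrank]
    _ ≤ (P * X).rank := Matrix.rank_mul_le_left _ _
    _ ≤ X.rank := Matrix.rank_mul_le_right _ _




lemma half_square (s t : ℕ) :
    s * t + s * (s - 1) / 2 + t * (t - 1) / 2 = (s + t) * (s + t - 1) / 2 := by
  have key : ∀ m : ℕ, 2 ∣ m * (m - 1) := by
    intro m
    cases m with
    | zero => simp
    | succ k =>
      simpa [Nat.succ_sub_one, Nat.mul_comm] using (Nat.even_mul_succ_self k).two_dvd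
  obtain ⟨a, ha⟩ := key s
  obtain ⟨b, hb⟩ := key t
  obtain ⟨c, hc⟩ := key (s + t)
  rw [ha, hb, hc, Nat.mul_div_cancel_left _ two_pos, Nat.mul_div_cancel_left _ two_pos,
    Nat.mul_div_cancel_left _ two_pos]
  rcases Nat.eq_zero_or_pos s with hs | hs
  · subst hs
    have h1 : 2 * b = 2 * c := hb.symm.trans (by simpa using hc)
    have h2 : 2 * a = 0 := by simpa using ha.symm
    simp only [Nat.zero_mul]
    omega
  rcases Nat.eq_zero_or_pos t with ht | ht
  · subst ht
    have h1 : 2 * a = 2 * c := ha.symm.trans (by simpa using hc)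
    have h2 : 2 * b = 0 := by simpa using hb.symm
    simp only [Nat.mul_zero]
    omega
  obtain ⟨k, rfl⟩ : ∃ k, s = k + 1 := ⟨s - 1, by omega⟩
  obtain ⟨l, rfl⟩ : ∃ l, t = l + 1 := ⟨t - 1, by omega⟩
  have h2 : 2 * ((k + 1) * (l + 1) + a + b) = 2 * c := by
    have e1 : (k + 1) * k = 2 * a := by simpa using ha
    have e2 : (l + 1) * l = 2 * b := by simpa using hb
    have e3 : (k + 1 + (l + 1)) * (k + l + 1) = 2 * c := by
      have : k + 1 + (l + 1) - 1 = k + l + 1 := by omega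
      simpa [this] using hc
    nlinarith [e1, e2, e3]
  omega


def wedgeSub (hn : s + t ≤ n) (hp : s + t ≤ p)
    (M : AffineSubspace F (Matrix (Fin t) (Fin t) F))
    (N : AffineSubspace F (Matrix (Fin s) (Fin s) F)) :
    AffineSubspace F (Matrix (Fin n) (Fin p) F) where
  carrier := wedge hn hp (M : Set _) (N : Set _)
  smul_vsub_vadd_mem' := by
    intro c p1 p2 p3 h1 h2 h3
    obtain ⟨hz1, hm1, hn1⟩ := h1
    obtain ⟨hz2, hm2, hn2⟩ := h2
    obtain ⟨hz3, hm3, hn3⟩ := h3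
    refine ⟨?_, ?_, ?_⟩
    · intro i j hi hj
      simp only [vsub_eq_sub, vadd_eq_add, Matrix.add_apply, Matrix.sub_apply,
        Matrix.smul_apply, hz1 i j hi hj, hz2 i j hi hj, hz3 i j hi hj,
        sub_zero, smul_zero, add_zero]
    · show blkM hn hp (c • (p1 -ᵥ p2) +ᵥ p3) ∈ M
      have he : blkM hn hp (c • (p1 -ᵥ p2) +ᵥ p3)
          = c • (blkM hn hp p1 -ᵥ blkM hn hp p2) +ᵥ blkM hn hp p3 := by
        ext a b
        simp [blkM, vsub_eq_sub, vadd_eq_add]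
      rw [he]
      exact M.smul_vsub_vadd_mem c hm1 hm2 hm3
    · show blkN hn hp (c • (p1 -ᵥ p2) +ᵥ p3) ∈ N
      have he : blkN hn hp (c • (p1 -ᵥ p2) +ᵥ p3)
          = c • (blkN hn hp p1 -ᵥ blkN hn hp p2) +ᵥ blkN hn hp p3 := by
        ext a b
        simp [blkN, vsub_eq_sub, vadd_eq_add]
      rw [he]
      exact N.smul_vsub_vadd_mem c hn1 hn2 hn3

lemma mem_wedgeSub_iff (hn : s + t ≤ n) (hp : s + t ≤ p)
    {M : AffineSubspace F (Matrix (Fin t) (Fin t) F)}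
    {N : AffineSubspace F (Matrix (Fin s) (Fin s) F)} {X : Matrix (Fin n) (Fin p) F} :
    X ∈ wedgeSub hn hp M N ↔
      (∀ (i : Fin n) (j : Fin p), s ≤ (i : ℕ) → t ≤ (j : ℕ) → X i j = 0) ∧
        blkM hn hp X ∈ M ∧ blkN hn hp X ∈ N :=
  Iff.rfl

lemma phiFun_mem_wedgeSub (hn : s + t ≤ n) (hp : s + t ≤ p)
    {M : AffineSubspace F (Matrix (Fin t) (Fin t) F)}
    {N : AffineSubspace F (Matrix (Fin s) (Fin s) F)} {v : PM F n p s t}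
    (hm : v.1 ∈ M) (hnn : v.2.1 ∈ N) :
    phiFun hn hp v ∈ wedgeSub hn hp M N := by
  rw [mem_wedgeSub_iff]
  refine ⟨phiFun_zero_cond hn hp v, ?_, ?_⟩
  · rw [blkM_phiFun]; exact hm
  · rw [blkN_phiFun]; exact hnn

/-- the big linear map whose range is the direction of the wedge -/
def bigMap (hn : s + t ≤ n) (hp : s + t ≤ p)
    (M : AffineSubspace F (Matrix (Fin t) (Fin t) F))
    (N : AffineSubspace F (Matrix (Fin s) (Fin s) F)) :
    (↥M.direction × ↥N.direction × Matrix (Fin s) (Fin t) F ×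
      Matrix (Fin s) (Fin (p - (s + t))) F × Matrix (Fin (n - (s + t))) (Fin t) F)
      →ₗ[F] Matrix (Fin n) (Fin p) F :=
  (phi hn hp).comp
    ((M.direction.subtype).prodMap ((N.direction.subtype).prodMap
      (LinearMap.id.prodMap (LinearMap.id.prodMap LinearMap.id))))

lemma bigMap_injective (hn : s + t ≤ n) (hp : s + t ≤ p)
    (M : AffineSubspace F (Matrix (Fin t) (Fin t) F))
    (N : AffineSubspace F (Matrix (Fin s) (Fin s) F)) :
    Function.Injective (bigMap hn hp M N) := by
  apply Function.Injective.comp (phi_injective hn hp)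
  simp only [LinearMap.coe_prodMap]
  exact (Subtype.val_injective).prodMap ((Subtype.val_injective).prodMap
    (Function.injective_id.prodMap (Function.injective_id.prodMap Function.injective_id)))

lemma direction_wedgeSub (hn : s + t ≤ n) (hp : s + t ≤ p)
    (M : AffineSubspace F (Matrix (Fin t) (Fin t) F))
    (N : AffineSubspace F (Matrix (Fin s) (Fin s) F))
    {M0 : Matrix (Fin t) (Fin t) F} (hM0 : M0 ∈ M)
    {N0 : Matrix (Fin s) (Fin s) F} (hN0 : N0 ∈ N) :
    (wedgeSub hn hp M N).direction = LinearMap.range (bigMap hn hp M N) := by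
  have hX0 : phiFun hn hp ((M0, N0, 0, 0, 0) : PM F n p s t) ∈ wedgeSub hn hp M N :=
    phiFun_mem_wedgeSub hn hp hM0 hN0
  apply le_antisymm
  · intro v hv
    rw [AffineSubspace.mem_direction_iff_eq_vsub ⟨_, hX0⟩] at hv
    obtain ⟨X1, hX1, X2, hX2, rfl⟩ := hv
    rw [mem_wedgeSub_iff] at hX1 hX2
    obtain ⟨hz1, hm1, hn1⟩ := hX1
    obtain ⟨hz2, hm2, hn2⟩ := hX2
    refine ⟨(⟨blkM hn hp X1 - blkM hn hp X2, ?_⟩, ⟨blkN hn hp X1 - blkN hn hp X2, ?_⟩,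
      blkA hn hp X1 - blkA hn hp X2, blkB hn hp X1 - blkB hn hp X2,
      blkC hn hp X1 - blkC hn hp X2), ?_⟩
    · simpa [vsub_eq_sub] using AffineSubspace.vsub_mem_direction hm1 hm2
    · simpa [vsub_eq_sub] using AffineSubspace.vsub_mem_direction hn1 hn2
    · show phiFun hn hp ((blkM hn hp X1 - blkM hn hp X2, blkN hn hp X1 - blkN hn hp X2,
          blkA hn hp X1 - blkA hn hp X2, blkB hn hp X1 - blkB hn hp X2,
          blkC hn hp X1 - blkC hn hp X2) : PM F n p s t) = X1 -ᵥ X2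
      have : ((blkM hn hp X1 - blkM hn hp X2, blkN hn hp X1 - blkN hn hp X2,
          blkA hn hp X1 - blkA hn hp X2, blkB hn hp X1 - blkB hn hp X2,
          blkC hn hp X1 - blkC hn hp X2) : PM F n p s t)
          = (blkM hn hp X1, blkN hn hp X1, blkA hn hp X1, blkB hn hp X1, blkC hn hp X1)
            - (blkM hn hp X2, blkN hn hp X2, blkA hn hp X2, blkB hn hp X2, blkC hn hp X2) := by
        rfl
      rw [vsub_eq_sub, this, show (phiFun (F := F) hn hp) = ⇑(phi (F := F) hn hp) from rfl,
        map_sub]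
      show phiFun hn hp _ - phiFun hn hp _ = _
      rw [phiFun_blocks hn hp X1 hz1, phiFun_blocks hn hp X2 hz2]
  · rintro v ⟨⟨⟨dm, hdm⟩, ⟨dn, hdn⟩, da, db, dc⟩, rfl⟩
    show phiFun hn hp ((dm, dn, da, db, dc) : PM F n p s t) ∈ _
    have h1 : phiFun hn hp ((dm + M0, dn + N0, da, db, dc) : PM F n p s t)
        ∈ wedgeSub hn hp M N := by
      refine phiFun_mem_wedgeSub hn hp ?_ ?_
      · simpa [vadd_eq_add] using AffineSubspace.vadd_mem_of_mem_direction hdm hM0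
      · simpa [vadd_eq_add] using AffineSubspace.vadd_mem_of_mem_direction hdn hN0
    have he : phiFun hn hp ((dm, dn, da, db, dc) : PM F n p s t)
        = phiFun hn hp ((dm + M0, dn + N0, da, db, dc) : PM F n p s t)
          -ᵥ phiFun hn hp ((M0, N0, 0, 0, 0) : PM F n p s t) := by
      rw [vsub_eq_sub, show (phiFun (F := F) hn hp) = ⇑(phi (F := F) hn hp) from rfl, ← map_sub]
      congr 1
      show _ = ((dm + M0, dn + N0, da, db, dc) : PM F n p s t) - (M0, N0, 0, 0, 0)
      ext <;> simp
    rw [he]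
    exact AffineSubspace.vsub_mem_direction h1 hX0

end Stmt3Aux

/-- If r = s + t and M, N are optimal affine subspaces of t×t and
s×s matrices over F, and n ≥ p ≥ r > 0, then M ∧_{n,p} N is an affine subspace
of n×p matrices in which every element has rank exactly r, of dimension
st + s(s-1)/2 + t(t-1)/2 + s(p-r) + (n-r)t = r(r-1)/2 + s(p-r) + (n-r)t. -/
theorem stmt_3 (F : Type) [Field F] (n p r s t : ℕ) (hrp : r ≤ p) (hpn : p ≤ n) (hr : 0 < r)
    (hst : r = s + t)
    (M : AffineSubspace F (Matrix (Fin t) (Fin t) F)) (hM : IsOptimal M)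
    (N : AffineSubspace F (Matrix (Fin s) (Fin s) F)) (hN : IsOptimal N) :
    ∃ S : AffineSubspace F (Matrix (Fin n) (Fin p) F),
      (S : Set (Matrix (Fin n) (Fin p) F))
          = wedge (show s + t ≤ n by omega) (show s + t ≤ p by omega)
              (M : Set (Matrix (Fin t) (Fin t) F)) (N : Set (Matrix (Fin s) (Fin s) F)) ∧
      (S : Set (Matrix (Fin n) (Fin p) F)).Nonempty ∧
      (∀ X ∈ S, X.rank = r) ∧
      Module.finrank F S.direction
        = s * t + s * (s - 1) / 2 + t * (t - 1) / 2 + s * (p - r) + (n - r) * t ∧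
      s * t + s * (s - 1) / 2 + t * (t - 1) / 2 + s * (p - r) + (n - r) * t
        = r * (r - 1) / 2 + s * (p - r) + (n - r) * t := by
  classical
  have hn : s + t ≤ n := by omega
  have hp : s + t ≤ p := by omega
  obtain ⟨M0, hM0⟩ := hM.1
  obtain ⟨N0, hN0⟩ := hN.1
  refine ⟨Stmt3Aux.wedgeSub hn hp M N, rfl, ?_, ?_, ?_, ?_⟩
  · exact ⟨_, Stmt3Aux.phiFun_mem_wedgeSub hn hp (v := (M0, N0, 0, 0, 0)) hM0 hN0⟩
  · intro X hX
    rw [Stmt3Aux.mem_wedgeSub_iff] at hX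
    obtain ⟨hz, hm, hnn⟩ := hX
    rw [hst]
    exact le_antisymm (Stmt3Aux.rank_le_aux hn hp X hz)
      (Stmt3Aux.rank_ge_aux hn hp X hz (hM.2.1 _ hm) (hN.2.1 _ hnn))
  · rw [Stmt3Aux.direction_wedgeSub hn hp M N hM0 hN0]
    rw [LinearMap.finrank_range_of_inj (Stmt3Aux.bigMap_injective hn hp M N)]
    rw [Module.finrank_prod, Module.finrank_prod, Module.finrank_prod, Module.finrank_prod]
    rw [hM.2.2, hN.2.2, Module.finrank_matrix, Module.finrank_matrix, Module.finrank_matrix]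
    simp only [Fintype.card_fin, Module.finrank_self, mul_one]
    subst hst
    generalize s * (s - 1) / 2 = a
    generalize t * (t - 1) / 2 = b
    generalize s * t = c
    generalize s * (p - (s + t)) = d
    generalize (n - (s + t)) * t = e
    omega
  · rw [show s * t + s * (s - 1) / 2 + t * (t - 1) / 2 = (s + t) * (s + t - 1) / 2 from
      Stmt3Aux.half_square s t, hst]
end

section
/- Let F be a field, n > 0, S an affine subspace of n×n matrices over F with direction (translation vector space) D, and A ∈ S an invertible matrix. Then every element of S is invertible if and only if the linear subspace {A⁻¹N : N ∈ D} of n×n matrices has trivial spectrum. -/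
private lemma mulVec_inj_of_isUnit {F : Type} [Field F] {n : ℕ}
    {M : Matrix (Fin n) (Fin n) F} (h : IsUnit M) {X : Fin n → F}
    (hX : M.mulVec X = 0) : X = 0 := by
  by_contra hne
  have hdet : M.det = 0 := (Matrix.exists_mulVec_eq_zero_iff).mp ⟨X, hne, hX⟩
  have := (Matrix.isUnit_iff_isUnit_det M).mp h
  rw [hdet] at this
  exact (not_isUnit_zero : ¬ IsUnit (0 : F)) this

/-- Let S be an affine subspace of n×n matrices over a field F
with direction D, and let A ∈ S be invertible. Then every element of S is
invertible if and only if the linear subspace {A⁻¹N : N ∈ D} has trivial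
spectrum (no element has a nonzero eigenvalue in F). -/
theorem stmt_4 (F : Type) [Field F] (n : ℕ) (hn : 0 < n)
    (S : AffineSubspace F (Matrix (Fin n) (Fin n) F))
    (A : Matrix (Fin n) (Fin n) F) (hA : A ∈ S) (hAinv : IsUnit A) :
    (∀ M ∈ S, IsUnit M) ↔
      (∀ N ∈ S.direction, ∀ μ : F, μ ≠ 0 →
        ∀ X : Fin n → F, (A⁻¹ * N).mulVec X = μ • X → X = 0) := by
  have hAA : A * A⁻¹ = 1 := Matrix.mul_nonsing_inv A
    ((Matrix.isUnit_iff_isUnit_det A).mp hAinv)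
  constructor
  · intro hall N hN μ hμ X hX
    have hNX : N.mulVec X = μ • A.mulVec X := by
      calc N.mulVec X = ((A * A⁻¹) * N).mulVec X := by rw [hAA, one_mul]
        _ = A.mulVec ((A⁻¹ * N).mulVec X) := by
            rw [Matrix.mulVec_mulVec, mul_assoc]
        _ = μ • A.mulVec X := by rw [hX, Matrix.mulVec_smul]
    set M : Matrix (Fin n) (Fin n) F := (-(μ⁻¹) • N) +ᵥ A with hM
    have hMS : M ∈ S := AffineSubspace.vadd_mem_of_mem_direction
      (Submodule.smul_mem _ _ hN) hA
    have hMX : M.mulVec X = 0 := by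
      have : M = A - μ⁻¹ • N := by
        simp [hM, vadd_eq_add, neg_smul]; abel
      rw [this, Matrix.sub_mulVec, Matrix.smul_mulVec, hNX,
        smul_smul, inv_mul_cancel₀ hμ, one_smul, sub_self]
    exact mulVec_inj_of_isUnit (hall M hMS) hMX
  · intro hspec M hM
    by_contra hMu
    have hdet : M.det = 0 := by
      by_contra h
      exact hMu ((Matrix.isUnit_iff_isUnit_det M).mpr (isUnit_iff_ne_zero.mpr h))
    obtain ⟨X, hXne, hXM⟩ := (Matrix.exists_mulVec_eq_zero_iff).mpr hdet
    have hN : M - A ∈ S.direction := AffineSubspace.vsub_mem_direction hM hA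
    have hX : (A⁻¹ * (M - A)).mulVec X = (-1 : F) • X := by
      have h1 : A⁻¹ * A = 1 := Matrix.nonsing_inv_mul A
        ((Matrix.isUnit_iff_isUnit_det A).mp hAinv)
      rw [mul_sub, h1, Matrix.sub_mulVec, ← Matrix.mulVec_mulVec, hXM,
        Matrix.mulVec_zero, Matrix.one_mulVec]
      simp
    exact hXne (hspec (M - A) hN (-1) (by norm_num) X hX)
end

section
/- Let F be a field with more than r+1 elements, and n > p > r > 0 be integers. Let W₁ and W₂ be optimal affine subspaces of r×r matrices over F such that W̃₁^(n,p) and W̃₂^(n,p) are equivalent as subsets of n×p matrices over F. Then W₁ and W₂ are equivalent as subsets of r×r matrices over F. -/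
/-- Two sets of n×p matrices are *equivalent* if one is obtained from the other
by multiplying on the left and right by fixed invertible matrices. -/
def MatEquiv {F : Type} [Field F] {n p : ℕ}
    (X Y : Set (Matrix (Fin n) (Fin p) F)) : Prop :=
  ∃ (P : Matrix (Fin n) (Fin n) F) (Q : Matrix (Fin p) (Fin p) F),
    IsUnit P ∧ IsUnit Q ∧ Y = (fun M => P * M * Q) '' X

lemma sum_castLE {β : Type*} [AddCommMonoid β] {r p : ℕ} (h : r ≤ p) (g : Fin p → β)
    (hg : ∀ l : Fin p, r ≤ (l : ℕ) → g l = 0) :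
    ∑ l, g l = ∑ l : Fin r, g (Fin.castLE h l) := by
  have : ∑ l : Fin r, g (Fin.castLE h l) = ∑ l ∈ Finset.univ.map (Fin.castLEEmb h), g l := by
    rw [Finset.sum_map]; rfl
  rw [this]
  symm
  apply Finset.sum_subset (Finset.subset_univ _)
  intro x _ hx
  apply hg
  by_contra hcon
  push_neg at hcon
  exact hx (Finset.mem_map.mpr ⟨⟨x.1, hcon⟩, Finset.mem_univ _, Fin.ext rfl⟩)

def iota {F : Type} [Field F] (r n p : ℕ) (M : Matrix (Fin r) (Fin r) F) :
    Matrix (Fin n) (Fin p) F :=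
  Matrix.of fun a b => if h : (a : ℕ) < r ∧ (b : ℕ) < r then M ⟨a, h.1⟩ ⟨b, h.2⟩ else 0

lemma iota_zero {F : Type} [Field F] (r n p : ℕ) (M : Matrix (Fin r) (Fin r) F)
    (a : Fin n) (b : Fin p) (h : ¬((a : ℕ) < r ∧ (b : ℕ) < r)) : iota r n p M a b = 0 := by
  simp only [iota, Matrix.of_apply]; rw [dif_neg h]

lemma key {F : Type} [Field F] {r n p : ℕ} (hrn : r ≤ n) (hrp : r ≤ p)
    (A : Matrix (Fin n) (Fin n) F) (M : Matrix (Fin r) (Fin r) F)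
    (B : Matrix (Fin p) (Fin p) F) (i j : Fin r) :
    (A * iota r n p M * B) (Fin.castLE hrn i) (Fin.castLE hrp j) =
      (A.submatrix (Fin.castLE hrn) (Fin.castLE hrn) * M *
        B.submatrix (Fin.castLE hrp) (Fin.castLE hrp)) i j := by
  simp only [Matrix.mul_apply, Matrix.submatrix_apply]
  rw [sum_castLE hrp]
  · apply Finset.sum_congr rfl
    intro l _
    congr 1
    rw [sum_castLE hrn]
    · apply Finset.sum_congr rfl
      intro k _
      congr 1
      simp [iota, Fin.is_lt]
    · intro k hk
      rw [iota_zero r n p M k _ (by simp; omega), mul_zero]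
  · intro l hl
    have : ∀ k : Fin n, iota r n p M k l = 0 := fun k =>
      iota_zero r n p M k l (by omega)
    simp [this]

/-- Over a field with more than r+1 elements, with n > p > r > 0,
if W₁ and W₂ are optimal affine subspaces of r×r matrices with W̃₁^(n,p)
equivalent to W̃₂^(n,p), then W₁ is equivalent to W₂. -/
theorem stmt_6 (F : Type) [Field F] (n p r : ℕ) (hr : 0 < r) (hrp : r < p) (hpn : p < n)
    (hF : ((r + 1 : ℕ) : Cardinal) < Cardinal.mk F)
    (W₁ W₂ : AffineSubspace F (Matrix (Fin r) (Fin r) F))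
    (hW₁ : IsOptimal W₁) (hW₂ : IsOptimal W₂)
    (hequiv : MatEquiv
      (tildeNP (show r ≤ n by omega) hrp.le (W₁ : Set (Matrix (Fin r) (Fin r) F)))
      (tildeNP (show r ≤ n by omega) hrp.le (W₂ : Set (Matrix (Fin r) (Fin r) F)))) :
    MatEquiv (W₁ : Set (Matrix (Fin r) (Fin r) F)) (W₂ : Set (Matrix (Fin r) (Fin r) F)) := by
  obtain ⟨P, Q, hP, hQ, himg⟩ := hequiv
  have hrn : r ≤ n := by omega
  set P₁ := P.submatrix (Fin.castLE hrn) (Fin.castLE hrn) with hP₁def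
  set Q₁ := Q.submatrix (Fin.castLE hrp.le) (Fin.castLE hrp.le) with hQ₁def
  -- every P₁ * M * Q₁ with M ∈ W₁ lies in W₂
  have hmem : ∀ M ∈ W₁, P₁ * M * Q₁ ∈ W₂ := by
    intro M hM
    have hι : iota r n p M ∈ tildeNP (show r ≤ n by omega) hrp.le (W₁ : Set _) := by
      refine ⟨fun i j hj => iota_zero _ _ _ _ _ _ (by omega), ?_⟩
      have : (Matrix.of fun (i j : Fin r) =>
          iota r n p M (Fin.castLE (show r ≤ n by omega) i) (Fin.castLE hrp.le j)) = M := by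
        ext i j
        simp [iota]
      rw [this]; exact hM
    have hmem' : P * iota r n p M * Q ∈ tildeNP (show r ≤ n by omega) hrp.le (W₂ : Set _) := by
      rw [himg]; exact ⟨_, hι, rfl⟩
    have h2 := hmem'.2
    have heq : (Matrix.of fun (i j : Fin r) =>
        (P * iota r n p M * Q) (Fin.castLE (show r ≤ n by omega) i) (Fin.castLE hrp.le j))
        = P₁ * M * Q₁ := by
      ext i j
      exact key _ _ P M Q i j
    rwa [heq] at h2
  obtain ⟨W₀, hW₀⟩ := hW₁.1
  have hT : IsUnit (P₁ * W₀ * Q₁) := hW₂.2.1 _ (hmem _ hW₀)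
  have hdet : IsUnit ((P₁ * W₀ * Q₁).det) := (Matrix.isUnit_iff_isUnit_det _).1 hT
  rw [Matrix.det_mul, Matrix.det_mul] at hdet
  have hP₁ : IsUnit P₁ := (Matrix.isUnit_iff_isUnit_det _).2
    (isUnit_of_mul_isUnit_left (isUnit_of_mul_isUnit_left hdet))
  have hQ₁ : IsUnit Q₁ := (Matrix.isUnit_iff_isUnit_det _).2 (isUnit_of_mul_isUnit_right hdet)
  -- the linear map M ↦ P₁ * M * Q₁
  let L : Matrix (Fin r) (Fin r) F →ₗ[F] Matrix (Fin r) (Fin r) F :=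
    { toFun := fun M => P₁ * M * Q₁
      map_add' := by intros; simp [Matrix.add_mul, Matrix.mul_add]
      map_smul' := by intros; simp [Matrix.smul_mul, Matrix.mul_smul] }
  have hinj : Function.Injective L := by
    intro a b hab
    simp only [L, LinearMap.coe_mk, AddHom.coe_mk] at hab
    exact hP₁.mul_left_cancel (hQ₁.mul_right_cancel hab)
  let S := AffineSubspace.map L.toAffineMap W₁
  have hSle : S ≤ W₂ := by
    intro x hx
    obtain ⟨y, hy, rfl⟩ := AffineSubspace.mem_map.1 hx
    exact hmem y hy
  have hfin : Module.finrank F S.direction = r * (r - 1) / 2 := by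
    rw [show S.direction = Submodule.map L W₁.direction from
      AffineSubspace.map_direction _ _, ← hW₁.2.2]
    exact (LinearEquiv.finrank_eq (Submodule.equivMapOfInjective L hinj W₁.direction)).symm
  have hdir : S.direction = W₂.direction :=
    Submodule.eq_of_le_of_finrank_eq (AffineSubspace.direction_le hSle)
      (by rw [hfin, hW₂.2.2])
  have hx0 : L W₀ ∈ S := AffineSubspace.mem_map.2 ⟨W₀, hW₀, rfl⟩
  have hSeq : S = W₂ :=
    AffineSubspace.ext_of_direction_eq hdir ⟨L W₀, hx0, hSle hx0⟩
  refine ⟨P₁, Q₁, hP₁, hQ₁, ?_⟩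
  rw [← hSeq]
  exact AffineSubspace.coe_map _ _
end

section
/- Let F be a field and n > 0. Let M be an affine subspace of n×n matrices over F all of whose elements are invertible. Then the dimension of M is at most n(n−1)/2. -/
/-!
Let `M` be an affine space of bijective linear maps `E → E'` with direction `V`; induct on
`n = dim E`. The crux is that some `x ≠ 0` in `E'` admits no nonzero rank-one map `g ⊗ x` in `V`.
Otherwise, fixing `A₀ ∈ M` and choosing for each `v ≠ 0` such a `g_v ≠ 0` with `g_v ⊗ A₀ v ∈ V`,
injectivity on the lines and planes of `M` through `A₀` spanned by these directions forces
`g_v v = 0` and `g_v w * g_w v = 0`, and an induction on dimension shows that no such selection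
of functionals exists.

Write `x = A₀ v`. Evaluation at `v` maps `V` into a proper subspace of `E'` (it misses `-x`), so
it accounts for at most `n - 1` dimensions. On its kernel, compressing to a complement `H` of
`F v` and to `E' ⧸ F x` is injective (a kernel element would be some `g ⊗ x`), and it sends the
corresponding slice of `M` to bijective maps `H → E' ⧸ F x` between `(n-1)`-dimensional spaces,
so by induction the kernel has dimension at most `(n-1).choose 2`.
-/

open Module

section OrthoSelection

variable {F E : Type*} [Field F] [AddCommGroup E] [Module F E]

structure IsOrthoSelection (W : Submodule F E) (G : E → Dual F E) : Prop where
  ne_zero : ∀ x ∉ W, G x ≠ 0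
  apply_self : ∀ x ∉ W, G x x = 0
  mul_apply_eq_zero : ∀ x ∉ W, ∀ y ∉ W, G x y * G y x = 0

theorem IsOrthoSelection.exists_lower_of_ne_top [FiniteDimensional F E] {W : Submodule F E}
    {G : E → Dual F E} (hG : IsOrthoSelection W G) (hW : W ≠ ⊤) :
    ∃ (H : Submodule F E) (W' : Submodule F H) (G' : H → Dual F H),
      finrank F H + 1 = finrank F E ∧ W' ≠ ⊤ ∧ IsOrthoSelection W' G' := by
  obtain ⟨x₀, hx₀⟩ := SetLike.exists_not_mem_of_ne_top W hW
  have hx₀0 : x₀ ≠ 0 := fun h => hx₀ (h ▸ W.zero_mem)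
  obtain ⟨H, hH⟩ := (F ∙ x₀).exists_isCompl
  have eq_zero_of_apply : ∀ g : Dual F E, g x₀ = 0 → (∀ h : H, g h = 0) → g = 0 := by
    intro g hgx hgH
    rw [← LinearMap.ker_eq_top, eq_top_iff, ← hH.sup_eq_top]
    exact sup_le (by simpa [Submodule.span_le] using hgx) fun h hh => hgH ⟨h, hh⟩
  classical
  -- Shifting the points of `W` by `x₀` moves `H` off `W` without changing values of
  -- functionals that vanish at `x₀`.
  let lift (h : H) : E := if (h : E) ∈ W then h + x₀ else h
  have lift_notMem (h : H) : lift h ∉ W := by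
    by_cases hh : (h : E) ∈ W
    · simpa [lift, hh] using fun hm => hx₀ (by simpa using W.sub_mem hm hh)
    · simp [lift, hh]
  have apply_lift (h : H) {g : Dual F E} (hg : g x₀ = 0) : g (lift h) = g h := by
    by_cases hh : (h : E) ∈ W <;> simp [lift, hh, hg]
  let W' := (LinearMap.ker (G x₀)).comap H.subtype
  have apply_lift_x₀ (h : H) (hh : h ∉ W') : G (lift h) x₀ = 0 := by
    have : G x₀ (lift h) ≠ 0 := by rwa [apply_lift h (hG.apply_self x₀ hx₀)]
    exact (mul_eq_zero.1 (hG.mul_apply_eq_zero x₀ hx₀ _ (lift_notMem h))).resolve_left this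
  refine ⟨H, W', fun h => G (lift h) ∘ₗ H.subtype, ?_, ?_, ⟨?_, ?_, ?_⟩⟩
  · rw [← Submodule.finrank_add_eq_of_isCompl hH, finrank_span_singleton hx₀0, add_comm]
  · intro hW'
    refine hG.ne_zero x₀ hx₀ (eq_zero_of_apply _ (hG.apply_self x₀ hx₀) fun h => ?_)
    simpa [W'] using hW'.ge (Submodule.mem_top (x := h))
  · intro h hh h0
    refine hG.ne_zero _ (lift_notMem h) (eq_zero_of_apply _ (apply_lift_x₀ h hh) fun h' => ?_)
    simpa using LinearMap.congr_fun h0 h'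
  · intro h hh
    simpa [apply_lift h (apply_lift_x₀ h hh)] using hG.apply_self _ (lift_notMem h)
  · intro h hh h' hh'
    simpa [apply_lift h (apply_lift_x₀ h' hh'), apply_lift h' (apply_lift_x₀ h hh)] using
      hG.mul_apply_eq_zero _ (lift_notMem h) _ (lift_notMem h')

theorem IsOrthoSelection.eq_top [FiniteDimensional F E] {W : Submodule F E}
    {G : E → Dual F E} (hG : IsOrthoSelection W G) : W = ⊤ := by
  induction hk : finrank F E generalizing E with
  | zero =>
    have := finrank_zero_iff.1 hk
    exact Subsingleton.elim _ _
  | succ k ih =>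
    by_contra hW
    obtain ⟨H, W', G', hH, hW', hG'⟩ := hG.exists_lower_of_ne_top hW
    exact hW' (ih hG' (by omega))

end OrthoSelection

theorem Submodule.finrank_map_add_finrank_inf_ker_s9 {F E E' : Type*} [Field F] [AddCommGroup E]
    [Module F E] [AddCommGroup E'] [Module F E'] [FiniteDimensional F E] (f : E →ₗ[F] E')
    (p : Submodule F E) :
    finrank F (p.map f) + finrank F ↥(p ⊓ LinearMap.ker f) = finrank F p := by
  rw [← LinearMap.range_domRestrict, ← Submodule.map_comap_subtype,
    Submodule.finrank_map_subtype_eq, ← LinearMap.ker_domRestrict]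
  exact (f.domRestrict p).finrank_range_add_finrank_ker

theorem AffineSubspace.add_mem_of_mem_direction {F V : Type*} [Field F] [AddCommGroup V]
    [Module F V] {M : AffineSubspace F V} {A B : V} (hA : A ∈ M) (hB : B ∈ M.direction) :
    A + B ∈ M := by
  simpa [add_comm] using M.vadd_mem_of_mem_direction hB hA

section LinearMaps

variable {F E E' : Type*} [Field F] [AddCommGroup E] [Module F E] [AddCommGroup E'] [Module F E']

section RankOne

variable {M : AffineSubspace F (E →ₗ[F] E')}

theorem apply_eq_zero_of_smulRight_mem_direction (hM : ∀ A ∈ M, Function.Injective A)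
    {A : E →ₗ[F] E'} (hA : A ∈ M) {g : Dual F E} {x : E'} (hg : g.smulRight x ∈ M.direction)
    {v : E} (hv : A v = x) : g v = 0 := by
  by_contra hgv
  have hmem : A + (-(g v)⁻¹) • g.smulRight x ∈ M :=
    M.add_mem_of_mem_direction hA (M.direction.smul_mem _ hg)
  have hkill : (A + (-(g v)⁻¹) • g.smulRight x) v = 0 := by
    simp [hv, hgv]
  exact hgv (by simp [hM _ hmem (hkill.trans (map_zero _).symm)])

theorem mul_apply_eq_zero_of_smulRight_mem_direction (hM : ∀ A ∈ M, Function.Injective A)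
    {A : E →ₗ[F] E'} (hA : A ∈ M) {g h : Dual F E} {x y : E'}
    (hg : g.smulRight x ∈ M.direction) (hh : h.smulRight y ∈ M.direction)
    {v w : E} (hv : A v = x) (hw : A w = y) : g w * h v = 0 := by
  by_contra hne
  have hgv := apply_eq_zero_of_smulRight_mem_direction hM hA hg hv
  have hhw := apply_eq_zero_of_smulRight_mem_direction hM hA hh hw
  have hmem : A + g.smulRight x + (g w * h v)⁻¹ • h.smulRight y ∈ M :=
    M.add_mem_of_mem_direction (M.add_mem_of_mem_direction hA hg) (M.direction.smul_mem _ hh)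
  have hkill : (A + g.smulRight x + (g w * h v)⁻¹ • h.smulRight y) (w - g w • v) = 0 := by
    simp only [LinearMap.add_apply, LinearMap.smul_apply, LinearMap.smulRight_apply, map_sub,
      map_smul, hv, hw, hgv, hhw]
    obtain ⟨hgw, hhv⟩ := mul_ne_zero_iff.1 hne
    match_scalars <;> field_simp <;> ring
  have hw_eq : w = g w • v := sub_eq_zero.1 (hM _ hmem (hkill.trans (map_zero _).symm))
  rw [hw_eq, map_smul, smul_eq_mul] at hhw
  exact hne hhw

theorem exists_ne_zero_forall_smulRight_mem_direction [FiniteDimensional F E] [Nontrivial E]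
    (hM : ∀ A ∈ M, Function.Injective A) {A₀ : E →ₗ[F] E'} (hA₀ : A₀ ∈ M) :
    ∃ x : E', x ≠ 0 ∧ ∀ g : Dual F E, g.smulRight x ∈ M.direction → g = 0 := by
  by_contra! hcon
  have hsel : ∀ v : E, ∃ g : Dual F E,
      v ∉ (⊥ : Submodule F E) → g ≠ 0 ∧ g.smulRight (A₀ v) ∈ M.direction := by
    intro v
    by_cases hv : v = 0
    · exact ⟨0, fun h => (h (by simp [hv])).elim⟩
    obtain ⟨g, hg, hg0⟩ := hcon (A₀ v) fun h => hv (hM A₀ hA₀ (h.trans (map_zero A₀).symm))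
    exact ⟨g, fun _ => ⟨hg0, hg⟩⟩
  choose G hG using hsel
  have hGsel : IsOrthoSelection ⊥ G :=
    ⟨fun v hv => (hG v hv).1,
      fun v hv => apply_eq_zero_of_smulRight_mem_direction hM hA₀ (hG v hv).2 rfl,
      fun v hv w hw =>
        mul_apply_eq_zero_of_smulRight_mem_direction hM hA₀ (hG v hv).2 (hG w hw).2 rfl rfl⟩
  exact bot_ne_top hGsel.eq_top

theorem finrank_map_applyₗ_direction_lt [FiniteDimensional F E']
    (hM : ∀ A ∈ M, Function.Injective A) {A₀ : E →ₗ[F] E'} (hA₀ : A₀ ∈ M) {v : E}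
    (hv : A₀ v ≠ 0) : finrank F (M.direction.map (LinearMap.applyₗ v)) < finrank F E' := by
  refine Submodule.finrank_lt fun htop => ?_
  obtain ⟨B, hB, hBv⟩ := htop.ge (Submodule.mem_top (x := -A₀ v))
  have hkill : (A₀ + B) v = (A₀ + B) 0 := by simp_all
  exact hv (by simp [hM _ (M.add_mem_of_mem_direction hA₀ hB) hkill])

end RankOne

section Compress

variable (H : Submodule F E) (q : Submodule F E')

def compress : (E →ₗ[F] E') →ₗ[F] H →ₗ[F] E' ⧸ q :=
  LinearMap.lcomp F _ H.subtype ∘ₗ LinearMap.compRight F q.mkQ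

@[simp]
theorem compress_apply (A : E →ₗ[F] E') (h : H) : compress H q A h = q.mkQ (A h) := rfl

variable {H}

theorem bijective_compress {A : E →ₗ[F] E'} (hA : Function.Bijective A) {v : E}
    (hH : IsCompl (F ∙ v) H) : Function.Bijective (compress H (F ∙ A v) A) := by
  let e := LinearEquiv.ofBijective A hA
  have hspan : (F ∙ v).map (e : E →ₗ[F] E') = F ∙ A v := by
    simp [Submodule.map_span, e]
  have : compress H (F ∙ A v) A =
      ((Submodule.quotientEquivOfIsCompl _ _ hH).symm.trans
        (Submodule.Quotient.equiv _ _ e hspan) : H →ₗ[F] E' ⧸ F ∙ A v) := by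
    ext h; rfl
  rw [this]
  exact LinearEquiv.bijective _

theorem exists_eq_smulRight_of_compress_eq_zero {B : E →ₗ[F] E'} {v : E} {x : E'} (hx : x ≠ 0)
    (hH : IsCompl (F ∙ v) H) (hBv : B v = 0) (hB : compress H (F ∙ x) B = 0) :
    ∃ g : Dual F E, B = g.smulRight x := by
  have hle : F ∙ v ⊔ H ≤ (F ∙ x).comap B :=
    sup_le (by simp [Submodule.span_le, hBv]) fun h hh => by
      simpa using LinearMap.congr_fun hB ⟨h, hh⟩
  have hrange (e : E) : B e ∈ F ∙ x := hle (hH.sup_eq_top ▸ Submodule.mem_top)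
  refine ⟨(LinearEquiv.toSpanNonzeroSingleton F E' x hx).symm ∘ₗ B.codRestrict _ hrange, ?_⟩
  ext e
  simp

theorem inf_ker_applyₗ_inf_ker_compress_eq_bot {V : Submodule F (E →ₗ[F] E')} {v : E} {x : E'}
    (hx : x ≠ 0) (hxV : ∀ g : Dual F E, g.smulRight x ∈ V → g = 0) (hH : IsCompl (F ∙ v) H) :
    V ⊓ LinearMap.ker (LinearMap.applyₗ v) ⊓ LinearMap.ker (compress H (F ∙ x)) = ⊥ := by
  rw [eq_bot_iff]
  rintro B ⟨⟨hBV, hBv⟩, hBΨ⟩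
  obtain ⟨g, rfl⟩ := exists_eq_smulRight_of_compress_eq_zero hx hH hBv hBΨ
  simp [hxV g hBV]

theorem bijective_of_mem_map_compress {M : AffineSubspace F (E →ₗ[F] E')}
    (hM : ∀ A ∈ M, Function.Bijective A) {A₀ : E →ₗ[F] E'} (hA₀ : A₀ ∈ M) {v : E}
    (hH : IsCompl (F ∙ v) H) :
    ∀ B ∈ (AffineSubspace.mk' A₀ (M.direction ⊓ LinearMap.ker (LinearMap.applyₗ v))).map
      (compress H (F ∙ A₀ v)).toAffineMap, Function.Bijective B := by
  rintro _ ⟨A, hA, rfl⟩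
  obtain ⟨hAV, hAv⟩ := AffineSubspace.mem_mk'.1 hA
  have hAM : A ∈ M := by simpa using M.add_mem_of_mem_direction hA₀ hAV
  have hAv : A v = A₀ v := by simpa [sub_eq_zero] using hAv
  have := bijective_compress (hM A hAM) hH
  rwa [hAv] at this

end Compress

theorem AffineSubspace.finrank_direction_le_choose_of_bijective [FiniteDimensional F E]
    [FiniteDimensional F E'] (M : AffineSubspace F (E →ₗ[F] E'))
    (hM : ∀ A ∈ M, Function.Bijective A) :
    finrank F M.direction ≤ (finrank F E).choose 2 := by
  induction hk : finrank F E generalizing E E' with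
  | zero =>
    calc finrank F M.direction ≤ finrank F (E →ₗ[F] E') := Submodule.finrank_le _
      _ = 0 := by simp [finrank_linearMap, hk]
  | succ k ih =>
    obtain hempty | ⟨A₀, hA₀⟩ := (M : Set (E →ₗ[F] E')).eq_empty_or_nonempty
    · rw [(AffineSubspace.coe_eq_bot_iff M).1 hempty, AffineSubspace.direction_bot, finrank_bot]
      exact Nat.zero_le _
    have : Nontrivial E := finrank_pos_iff (R := F).1 (by omega)
    have hinj : ∀ A ∈ M, Function.Injective A := fun A hA => (hM A hA).1
    obtain ⟨x, hx, hxV⟩ := exists_ne_zero_forall_smulRight_mem_direction hinj hA₀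
    obtain ⟨v, rfl⟩ := (hM A₀ hA₀).2 x
    obtain ⟨H, hH⟩ := (F ∙ v).exists_isCompl
    set φ := LinearMap.applyₗ (R := F) (M₂ := E') v
    set K := M.direction ⊓ LinearMap.ker φ
    set Ψ := compress H (F ∙ A₀ v)
    have hrank_image : finrank F (M.direction.map φ) ≤ k := by
      have hE' : finrank F E' = k + 1 := (LinearEquiv.ofBijective A₀ (hM A₀ hA₀)).finrank_eq ▸ hk
      have : finrank F (M.direction.map φ) < finrank F E' :=
        finrank_map_applyₗ_direction_lt hinj hA₀ hx
      omega
    have hrank_kernel : finrank F (K.map Ψ) ≤ k.choose 2 := by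
      have hv : v ≠ 0 := by rintro rfl; exact hx (map_zero A₀)
      have hH_rank : finrank F H = k := by
        have := Submodule.finrank_add_eq_of_isCompl hH
        rw [finrank_span_singleton hv] at this
        omega
      have := ih _ (bijective_of_mem_map_compress hM hA₀ hH) hH_rank
      rwa [AffineSubspace.map_direction, AffineSubspace.direction_mk'] at this
    calc finrank F M.direction
        = finrank F (M.direction.map φ) + finrank F K :=
          (M.direction.finrank_map_add_finrank_inf_ker_s9 _).symm
      _ = finrank F (M.direction.map φ) + finrank F (K.map Ψ) := by
          rw [← K.finrank_map_add_finrank_inf_ker_s9 Ψ,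
            inf_ker_applyₗ_inf_ker_compress_eq_bot hx hxV hH, finrank_bot, add_zero]
      _ ≤ k + k.choose 2 := add_le_add hrank_image hrank_kernel
      _ = (k + 1).choose 2 := by simp [Nat.choose_succ_succ]

end LinearMaps

theorem stmt_9_general (F : Type) [Field F] (n : ℕ)
    (M : AffineSubspace F (Matrix (Fin n) (Fin n) F))
    (hinv : ∀ A ∈ M, IsUnit A) :
    Module.finrank F M.direction ≤ n * (n - 1) / 2 := by
  let Φ : Matrix (Fin n) (Fin n) F ≃ₗ[F] End F (Fin n → F) := Matrix.toLin'
  have hbij : ∀ A ∈ M.map Φ.toLinearMap.toAffineMap, Function.Bijective A := by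
    rintro _ ⟨A, hA, rfl⟩
    exact (End.isUnit_iff _).1 ((hinv A hA).map Matrix.toLinAlgEquiv')
  have := AffineSubspace.finrank_direction_le_choose_of_bijective _ hbij
  rwa [AffineSubspace.map_direction, LinearMap.toAffineMap_linear, LinearEquiv.finrank_map_eq,
    finrank_fin_fun, Nat.choose_two_right] at this

/-- Over any field F, an affine subspace of n×n matrices all of
whose elements are invertible has dimension at most n(n-1)/2. -/
theorem stmt_9 (F : Type) [Field F] (n : ℕ) (hn : 0 < n)
    (M : AffineSubspace F (Matrix (Fin n) (Fin n) F))
    (hne : (M : Set (Matrix (Fin n) (Fin n) F)).Nonempty)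
    (hinv : ∀ A ∈ M, IsUnit A) :
    Module.finrank F M.direction ≤ n * (n - 1) / 2 :=
  stmt_9_general F n M hinv
end

section
/- Let F be a field, n > 0, and P ∈ GL_n(F) be nonisotropic. Then P + Alt_n(F) = {P + A : A alternating} is an optimal affine subspace of n×n matrices over F: every element of P + Alt_n(F) is invertible, and its dimension equals n(n−1)/2. -/
open Matrix

section Aux

variable (F : Type) [Field F] (n : ℕ)

/-- quadratic form of alternating matrix vanishes -/
lemma alt_quad {F : Type} [Field F] {n : ℕ} (A : Matrix (Fin n) (Fin n) F)
    (hA : Aᵀ = -A) (hA' : ∀ i, A i i = 0) (X : Fin n → F) :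
    X ⬝ᵥ A.mulVec X = 0 := by
  classical
  have key : ∀ i j, A j i = - A i j := fun i j => by
    have := congrFun (congrFun hA i) j
    simpa [Matrix.transpose_apply] using this
  have hrw : X ⬝ᵥ A.mulVec X
      = ∑ p ∈ Finset.univ ×ˢ (Finset.univ : Finset (Fin n)),
          X p.1 * A p.1 p.2 * X p.2 := by
    rw [Finset.sum_product]
    simp [dotProduct, Matrix.mulVec, Finset.mul_sum, mul_assoc]
  rw [hrw]
  refine Finset.sum_ninvolution (fun p => (p.2, p.1)) ?_ ?_ (fun _ => by simp) (fun _ => rfl)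
  · intro p
    simp only
    rw [key p.1 p.2]
    ring
  · intro p hp heq
    apply hp
    have h12 : p.2 = p.1 := congrArg Prod.fst heq
    rw [h12, hA' p.1, mul_zero, zero_mul]

/-- the submodule of alternating matrices -/
def altSub : Submodule F (Matrix (Fin n) (Fin n) F) where
  carrier := {A | Aᵀ = -A ∧ ∀ i, A i i = 0}
  add_mem' := by
    rintro A B ⟨hA, hA'⟩ ⟨hB, hB'⟩
    exact ⟨by rw [Matrix.transpose_add, hA, hB, neg_add],
      fun i => by simp [Matrix.add_apply, hA' i, hB' i]⟩
  zero_mem' := ⟨by simp, fun i => rfl⟩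
  smul_mem' := by
    rintro c A ⟨hA, hA'⟩
    exact ⟨by rw [Matrix.transpose_smul, hA, smul_neg],
      fun i => by simp [Matrix.smul_apply, hA' i]⟩

/-- linear equivalence with strictly-upper-triangular coordinates -/
noncomputable def altEquiv :
    (altSub F n) ≃ₗ[F] ({p : Fin n × Fin n // p.1 < p.2} → F) where
  toFun A := fun p => A.1 p.1.1 p.1.2
  map_add' A B := rfl
  map_smul' c A := rfl
  invFun f := ⟨Matrix.of fun i j =>
      if h : i < j then f ⟨(i, j), h⟩ else if h' : j < i then -f ⟨(j, i), h'⟩ else 0, by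
    constructor
    · ext i j
      simp only [Matrix.transpose_apply, Matrix.neg_apply, Matrix.of_apply]
      rcases lt_trichotomy i j with h | h | h
      · rw [dif_neg (asymm h), dif_pos h, dif_pos h]
      · subst h
        simp [lt_irrefl]
      · rw [dif_pos h, dif_neg (asymm h), dif_pos h, neg_neg]
    · intro i
      simp [lt_irrefl]⟩
  left_inv := by
    rintro ⟨A, hA, hA'⟩
    apply Subtype.ext
    ext i j
    simp only [Matrix.of_apply]
    rcases lt_trichotomy i j with h | h | h
    · rw [dif_pos h]
    · subst h
      simp [lt_irrefl, hA' i]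
    · rw [dif_neg (asymm h), dif_pos h]
      have := congrFun (congrFun hA j) i
      simpa [Matrix.transpose_apply] using this.symm
  right_inv := by
    intro f
    funext p
    simp only [Matrix.of_apply, dif_pos p.2]

def ltEquivSigma : {p : Fin n × Fin n // p.1 < p.2} ≃ (Σ j : Fin n, Fin j) where
  toFun p := ⟨p.1.2, ⟨p.1.1, p.2⟩⟩
  invFun s := ⟨(⟨s.2, s.2.isLt.trans s.1.isLt⟩, s.1), s.2.isLt⟩
  left_inv p := rfl
  right_inv s := rfl

lemma card_lt_pairs : Fintype.card {p : Fin n × Fin n // p.1 < p.2} = n * (n - 1) / 2 := by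
  rw [Fintype.card_congr (ltEquivSigma n), Fintype.card_sigma]
  simp only [Fintype.card_fin]
  rw [Fin.sum_univ_eq_sum_range (fun i => i) n, Finset.sum_range_id]

end Aux

/-- If P is an invertible nonisotropic n×n matrix over a field F,
then P + Alt_n(F) is an optimal affine subspace of n×n matrices: every element
is invertible, and its dimension equals n(n-1)/2. -/
theorem stmt_10 (F : Type) [Field F] (n : ℕ) (hn : 0 < n)
    (P : Matrix (Fin n) (Fin n) F) (hP : IsUnit P)
    (hiso : ∀ X : Fin n → F, X ≠ 0 → X ⬝ᵥ P.mulVec X ≠ 0) :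
    (∀ A : Matrix (Fin n) (Fin n) F, Aᵀ = -A → (∀ i, A i i = 0) → IsUnit (P + A)) ∧
    ∃ S : AffineSubspace F (Matrix (Fin n) (Fin n) F),
      (S : Set (Matrix (Fin n) (Fin n) F))
        = {M | ∃ A : Matrix (Fin n) (Fin n) F, Aᵀ = -A ∧ (∀ i, A i i = 0) ∧ M = P + A} ∧
      (∀ M ∈ S, IsUnit M) ∧
      Module.finrank F S.direction = n * (n - 1) / 2 := by
  classical
  have hunit : ∀ A : Matrix (Fin n) (Fin n) F, Aᵀ = -A → (∀ i, A i i = 0) →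
      IsUnit (P + A) := by
    intro A hA hA'
    rw [Matrix.isUnit_iff_isUnit_det, isUnit_iff_ne_zero]
    intro hdet
    obtain ⟨X, hX, hXv⟩ := (Matrix.exists_mulVec_eq_zero_iff).mpr hdet
    apply hiso X hX
    have h0 : X ⬝ᵥ (P + A).mulVec X = 0 := by rw [hXv, dotProduct_zero]
    rwa [Matrix.add_mulVec, dotProduct_add, alt_quad A hA hA' X, add_zero] at h0
  have hcoe : ((AffineSubspace.mk' P (altSub F n) : AffineSubspace F (Matrix (Fin n) (Fin n) F)) :
      Set (Matrix (Fin n) (Fin n) F))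
      = {M | ∃ A : Matrix (Fin n) (Fin n) F, Aᵀ = -A ∧ (∀ i, A i i = 0) ∧ M = P + A} := by
    ext M
    rw [SetLike.mem_coe, AffineSubspace.mem_mk']
    constructor
    · intro h
      exact ⟨M - P, h.1, h.2, by abel⟩
    · rintro ⟨A, hA, hA', rfl⟩
      have : (P + A) -ᵥ P = A := by simp [vsub_eq_sub]
      rw [this]
      exact ⟨hA, hA'⟩
  refine ⟨hunit, AffineSubspace.mk' P (altSub F n), hcoe, ?_, ?_⟩
  · intro M hM
    have : M ∈ ((AffineSubspace.mk' P (altSub F n) :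
        AffineSubspace F (Matrix (Fin n) (Fin n) F)) : Set (Matrix (Fin n) (Fin n) F)) := hM
    rw [hcoe] at this
    obtain ⟨A, hA, hA', rfl⟩ := this
    exact hunit A hA hA'
  · rw [AffineSubspace.direction_mk']
    rw [(altEquiv F n).finrank_eq, Module.finrank_pi]
    exact card_lt_pairs n
end

section
/- (Affine Flanders–Atkinson lemma) Let F be a field with more than r+1 elements and n, p, r be integers with 0 < r ≤ min(n, p). Let J_r be the n×p matrix with top-left block I_r and all other entries zero, and let M be an n×p matrix over F with block decomposition M = [[A, C],[B, D]] where A is r×r, C is r×(p−r), B is (n−r)×r, and D is (n−r)×(p−r). If rank(J_r + tM) ≤ r for every t ∈ F, then D = 0 and B·A^k·C = 0 for every integer k ≥ 0. -/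
/-!
For `i, j ≥ r`, the `(r + 1)`-minor of `J_r + t • M` on the rows `0, …, r - 1, i` and the columns
`0, …, r - 1, j` has rank at most `r`, so its determinant vanishes for every `t`. That determinant
is a polynomial in `t` of degree at most `r + 1`, hence it is identically zero because `F` has more
than `r + 1` elements. Over `F⟦t⟧` the top-left block `1 + t • A` is invertible with inverse
`∑ₘ (-A)ᵐ tᵐ`, and the Schur complement turns the vanishing of the minor into
`t • d - t² • ∑ₘ (b (-A)ᵐ c) tᵐ = 0`, where `d = M i j`, `b` is row `i` of `B` and `c` is column
`j` of `C`. Comparing coefficients gives `d = 0` and `b Aᵐ c = 0` for all `m`.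
-/

open Matrix Polynomial Cardinal

namespace Matrix

theorem map_coeToPowerSeries_X_smul_add_fromBlocks {ι κ R : Type*} [DecidableEq ι] [CommRing R]
    (N : Matrix (ι ⊕ κ) (ι ⊕ κ) R) :
    ((X : R[X]) • N.map C + (fromBlocks 1 0 0 0 : Matrix (ι ⊕ κ) (ι ⊕ κ) R).map C).map
        (coeToPowerSeries.ringHom (R := R)) =
      fromBlocks (1 + (PowerSeries.X : PowerSeries R) • N.toBlocks₁₁.map PowerSeries.C)
        ((PowerSeries.X : PowerSeries R) • N.toBlocks₁₂.map PowerSeries.C)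
        ((PowerSeries.X : PowerSeries R) • N.toBlocks₂₁.map PowerSeries.C)
        ((PowerSeries.X : PowerSeries R) • N.toBlocks₂₂.map PowerSeries.C) := by
  conv_lhs => rw [← fromBlocks_toBlocks N]
  ext (i | i) (j | j) : 1 <;>
    simp [one_apply, apply_ite (fun p : R[X] => (p : PowerSeries R))] <;> ring

section Pencil

variable {ι R : Type*} [Fintype ι] [DecidableEq ι] [CommRing R]

noncomputable def invOneAddXSmul (A : Matrix ι ι R) : Matrix ι ι (PowerSeries R) :=
  of fun i j => PowerSeries.mk fun m => ((-A) ^ m) i j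

theorem coeff_map_C_mul_invOneAddXSmul {κ : Type*} (A : Matrix ι ι R) (B : Matrix κ ι R)
    (i : κ) (j : ι) (m : ℕ) :
    PowerSeries.coeff m ((B.map PowerSeries.C * invOneAddXSmul A) i j) = (B * (-A) ^ m) i j := by
  simp [mul_apply, invOneAddXSmul, map_sum, PowerSeries.coeff_C_mul]

theorem coeff_map_C_mul_invOneAddXSmul_mul_map_C {κ κ' : Type*} (A : Matrix ι ι R)
    (B : Matrix κ ι R) (C : Matrix ι κ' R) (i : κ) (j : κ') (m : ℕ) :
    PowerSeries.coeff m ((B.map PowerSeries.C * invOneAddXSmul A * C.map PowerSeries.C) i j) =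
      (B * (-A) ^ m * C) i j := by
  rw [mul_apply, mul_apply, map_sum]
  simp only [map_apply, PowerSeries.coeff_mul_C, coeff_map_C_mul_invOneAddXSmul]

theorem one_add_X_smul_mul_invOneAddXSmul (A : Matrix ι ι R) :
    (1 + (PowerSeries.X : PowerSeries R) • A.map PowerSeries.C) * invOneAddXSmul A = 1 := by
  ext i j m
  rw [add_mul, one_mul, smul_mul, add_apply, smul_apply, smul_eq_mul, map_add]
  cases m with
  | zero => simp [invOneAddXSmul, one_apply]
  | succ m =>
    rw [PowerSeries.coeff_succ_X_mul, coeff_map_C_mul_invOneAddXSmul]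
    simp [invOneAddXSmul, pow_succ', one_apply, apply_ite]

theorem toBlocks_eq_zero_of_det_X_smul_add_eq_zero (N : Matrix (ι ⊕ Unit) (ι ⊕ Unit) R)
    (h : ((X : R[X]) • N.map C + (fromBlocks 1 0 0 0 : Matrix (ι ⊕ Unit) (ι ⊕ Unit) R).map C).det
      = 0) :
    N.toBlocks₂₂ = 0 ∧ ∀ k : ℕ, N.toBlocks₂₁ * N.toBlocks₁₁ ^ k * N.toBlocks₁₂ = 0 := by
  set A := N.toBlocks₁₁
  set P := 1 + (PowerSeries.X : PowerSeries R) • A.map PowerSeries.C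
  have hPS : P * invOneAddXSmul A = 1 := one_add_X_smul_mul_invOneAddXSmul A
  let : Invertible P := invertibleOfRightInverse _ _ hPS
  have hP : IsUnit P.det := isUnit_det_of_right_inverse hPS
  set s := PowerSeries.mk fun m => (N.toBlocks₂₁ * (-A) ^ m * N.toBlocks₁₂) () ()
  have hschur : PowerSeries.X * (PowerSeries.C (N.toBlocks₂₂ () ()) - PowerSeries.X * s) = 0 := by
    have h' := congrArg (coeToPowerSeries.ringHom (R := R)) h
    rw [map_zero, RingHom.map_det, RingHom.mapMatrix_apply,
      map_coeToPowerSeries_X_smul_add_fromBlocks, det_fromBlocks₁₁,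
      det_unique (_ : Matrix Unit Unit _), hP.mul_right_eq_zero] at h'
    have hs : (N.toBlocks₂₁.map PowerSeries.C * ⅟P * N.toBlocks₁₂.map PowerSeries.C) () () = s := by
      ext m
      rw [PowerSeries.coeff_mk]
      exact coeff_map_C_mul_invOneAddXSmul_mul_map_C A _ _ () () m
    rw [← h']
    simp only [Matrix.smul_mul, Matrix.mul_smul, smul_smul, sub_apply, smul_apply, smul_eq_mul,
      map_apply]
    rw [← hs]
    ring
  have hD : PowerSeries.C (N.toBlocks₂₂ () ()) = PowerSeries.X * s :=
    sub_eq_zero.mp (PowerSeries.X_mul_cancel (hschur.trans (mul_zero _).symm))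
  have hd : N.toBlocks₂₂ () () = 0 := by
    simpa using congrArg PowerSeries.constantCoeff hD
  have hs0 : s = 0 := PowerSeries.X_mul_cancel (by rw [← hD, hd, map_zero, mul_zero])
  refine ⟨ext fun _ _ => hd, fun k => ext fun _ _ => ?_⟩
  have hk := congrArg (PowerSeries.coeff k) hs0
  rw [PowerSeries.coeff_mk, map_zero, neg_pow] at hk
  rcases neg_one_pow_eq_or (Matrix ι ι R) k with h | h <;> simpa [h] using hk

variable [IsDomain R]

theorem det_eq_zero_of_rank_lt_s12 {A : Matrix ι ι R} (h : A.rank < Fintype.card ι) : A.det = 0 := by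
  by_contra hA
  exact h.ne (rank_of_det_ne_zero hA)

theorem det_X_smul_add_eq_zero_of_forall_det_eq_zero (A B : Matrix ι ι R)
    (hR : (Fintype.card ι : Cardinal) < #R) (h : ∀ t : R, (A + t • B).det = 0) :
    ((X : R[X]) • B.map C + A.map C).det = 0 := by
  refine eq_zero_of_forall_eval_zero_of_natDegree_lt_card _ (fun t => ?_)
    ((Nat.cast_le.mpr (natDegree_det_X_add_C_le B A)).trans_lt hR)
  rw [← coe_evalRingHom, RingHom.map_det, ← h t, RingHom.mapMatrix_apply]
  congr 1
  ext i j
  simp only [map_apply, add_apply, smul_apply, coe_evalRingHom, eval_add, eval_mul, eval_C, eval_X,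
    smul_eq_mul]
  ring

theorem toBlocks_eq_zero_of_forall_det_eq_zero (N : Matrix (ι ⊕ Unit) (ι ⊕ Unit) R)
    (hR : ((Fintype.card ι + 1 : ℕ) : Cardinal) < #R)
    (h : ∀ t : R, (fromBlocks 1 0 0 0 + t • N).det = 0) :
    N.toBlocks₂₂ = 0 ∧ ∀ k : ℕ, N.toBlocks₂₁ * N.toBlocks₁₁ ^ k * N.toBlocks₁₂ = 0 :=
  toBlocks_eq_zero_of_det_X_smul_add_eq_zero N
    (det_X_smul_add_eq_zero_of_forall_det_eq_zero _ N (by simpa using hR) h)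

end Pencil

section BorderedMinor

variable {α : Type*} {n p r : ℕ}

def truncatedIdentity [Zero α] [One α] (n p r : ℕ) : Matrix (Fin n) (Fin p) α :=
  of fun i j => if (i : ℕ) = j ∧ (i : ℕ) < r then 1 else 0

def borderedMinor (M : Matrix (Fin n) (Fin p) α) (hrn : r ≤ n) (hrp : r ≤ p) (i : Fin n)
    (j : Fin p) : Matrix (Fin r ⊕ Unit) (Fin r ⊕ Unit) α :=
  M.submatrix (Sum.elim (Fin.castLE hrn) fun _ => i) (Sum.elim (Fin.castLE hrp) fun _ => j)

theorem borderedMinor_truncatedIdentity [Zero α] [One α] (hrn : r ≤ n) (hrp : r ≤ p) {i : Fin n}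
    {j : Fin p} (hi : r ≤ i) (hj : r ≤ j) :
    borderedMinor (truncatedIdentity n p r) hrn hrp i j = (fromBlocks 1 0 0 0 : Matrix _ _ α) := by
  ext (a | a) (b | b) <;> simp [borderedMinor, truncatedIdentity, one_apply, Fin.ext_iff] <;> omega

theorem borderedMinor_truncatedIdentity_add_smul {R : Type*} [Semiring R]
    (M : Matrix (Fin n) (Fin p) R) (t : R) (hrn : r ≤ n) (hrp : r ≤ p) {i : Fin n} {j : Fin p}
    (hi : r ≤ i) (hj : r ≤ j) :
    borderedMinor (truncatedIdentity n p r + t • M) hrn hrp i j =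
      fromBlocks 1 0 0 0 + t • borderedMinor M hrn hrp i j := by
  rw [← borderedMinor_truncatedIdentity hrn hrp hi hj]
  rfl

theorem det_borderedMinor_eq_zero_of_rank_le {R : Type*} [CommRing R] [IsDomain R]
    {M : Matrix (Fin n) (Fin p) R} (hM : M.rank ≤ r) (hrn : r ≤ n) (hrp : r ≤ p) (i : Fin n)
    (j : Fin p) : (borderedMinor M hrn hrp i j).det = 0 :=
  det_eq_zero_of_rank_lt_s12 <|
    (rank_submatrix_le _ _ _).trans_lt (by simpa using hM.trans_lt r.lt_succ_self)

end BorderedMinor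

end Matrix

/-- Affine Flanders–Atkinson lemma: Over a field with more than
r+1 elements, with 0 < r ≤ min(n, p), if M = [[A, C], [B, D]] (A of size r×r)
is an n×p matrix such that rank(J_r + t·M) ≤ r for all t ∈ F, where J_r is the
n×p matrix with top-left block I_r and zeros elsewhere, then D = 0 and
B·A^k·C = 0 for every integer k ≥ 0. -/
theorem stmt_12 (F : Type) [Field F] (n p r : ℕ) (hrn : r ≤ n) (hrp : r ≤ p)
    (hF : ((r + 1 : ℕ) : Cardinal) < Cardinal.mk F)
    (M : Matrix (Fin n) (Fin p) F)
    (hrank : ∀ t : F,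
      (Matrix.of (fun (i : Fin n) (j : Fin p) =>
          if (i : ℕ) = (j : ℕ) ∧ (i : ℕ) < r then (1 : F) else 0) + t • M).rank ≤ r) :
    (∀ (i : Fin n) (j : Fin p), r ≤ (i : ℕ) → r ≤ (j : ℕ) → M i j = 0) ∧
    ∀ k : ℕ,
      (Matrix.of fun (a : Fin (n - r)) (b : Fin r) =>
          M ⟨r + ↑a, by have := a.isLt; omega⟩ (Fin.castLE hrp b)) *
        (Matrix.of fun (a b : Fin r) => M (Fin.castLE hrn a) (Fin.castLE hrp b)) ^ k *
        (Matrix.of fun (a : Fin r) (b : Fin (p - r)) =>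
          M (Fin.castLE hrn a) ⟨r + ↑b, by have := b.isLt; omega⟩) = 0 := by
  have key (i : Fin n) (j : Fin p) (hi : r ≤ i) (hj : r ≤ j) :=
    toBlocks_eq_zero_of_forall_det_eq_zero (borderedMinor M hrn hrp i j) (by simpa using hF)
      fun t => by
        rw [← borderedMinor_truncatedIdentity_add_smul M t hrn hrp hi hj]
        exact det_borderedMinor_eq_zero_of_rank_le (hrank t) hrn hrp i j
  refine ⟨fun i j hi hj => congrFun₂ (key i j hi hj).1 () (), fun k => ext fun a b => ?_⟩
  -- entry `(a, b)` of `B Aᵏ C` is, definitionally, the corner of the minor bordered by `r + a, r + b`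
  exact congrFun₂ ((key ⟨r + a, _⟩ ⟨r + b, _⟩ (Nat.le_add_right _ _) (Nat.le_add_right _ _)).2 k)
    () ()
end

section
/- Let F be a field with more than 2 elements and n, r be integers with 1 ≤ r ≤ n. Let M and M' be optimal affine subspaces of r×r matrices over F such that M̃^(n) and M̃'^(n) are equivalent as subsets of n×r matrices over F. Then M and M' are equivalent as subsets of r×r matrices over F. -/
/-- Given a set M of r×r matrices and n ≥ r, the set M̃^(n) of n×r matrices
[B; C] (stacked vertically) with B ∈ M and C an arbitrary (n-r)×r matrix;
i.e. the n×r matrices whose top r rows form an element of M. -/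
def tildeN {F : Type} [Field F] {r n : ℕ} (hrn : r ≤ n)
    (M : Set (Matrix (Fin r) (Fin r) F)) : Set (Matrix (Fin n) (Fin r) F) :=
  {X | (Matrix.of fun (a b : Fin r) => X (Fin.castLE hrn a) b) ∈ M}


open Matrix

/-- The top r×r block of an n×r matrix. -/
def topSub {F : Type} [Field F] {r n : ℕ} (hrn : r ≤ n)
    (X : Matrix (Fin n) (Fin r) F) : Matrix (Fin r) (Fin r) F :=
  Matrix.of fun a b => X (Fin.castLE hrn a) b

/-- Extend an r×r matrix to an n×r matrix with zero bottom part. -/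
def extSub {F : Type} [Field F] {r n : ℕ} (hrn : r ≤ n)
    (B : Matrix (Fin r) (Fin r) F) : Matrix (Fin n) (Fin r) F :=
  Matrix.of fun a b => if h : (a : ℕ) < r then B ⟨a, h⟩ b else 0

lemma myTop_ext {F : Type} [Field F] {r n : ℕ} (hrn : r ≤ n)
    (B : Matrix (Fin r) (Fin r) F) : topSub hrn (extSub hrn B) = B := by
  ext i j
  simp [topSub, extSub, i.isLt]

lemma myTop_add {F : Type} [Field F] {r n : ℕ} (hrn : r ≤ n)
    (X Y : Matrix (Fin n) (Fin r) F) :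
    topSub hrn (X + Y) = topSub hrn X + topSub hrn Y := by
  ext i j; simp [topSub]

lemma vecMulVec_mulVec' {F : Type} [Field F] {r : ℕ} (v w u : Fin r → F) :
    vecMulVec v w *ᵥ u = (w ⬝ᵥ u) • v := by
  funext j
  simp only [Matrix.mulVec, Matrix.vecMulVec_apply, dotProduct, Pi.smul_apply, smul_eq_mul,
    Finset.sum_mul, Finset.mul_sum]
  exact Finset.sum_congr rfl fun k _ => by ring

lemma aux_rank_one {F : Type} [Field F] {r : ℕ} (A : Matrix (Fin r) (Fin r) F)
    (hA : IsUnit A) (v : Fin r → F) (hv : v ≠ 0) :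
    ∃ w : Fin r → F, ¬ IsUnit (A + vecMulVec v w) := by
  have hdet : IsUnit A.det := (Matrix.isUnit_iff_isUnit_det A).mp hA
  have hAinv : A * A⁻¹ = 1 := Matrix.mul_nonsing_inv A hdet
  set u := A⁻¹ *ᵥ v with hu
  have hAu : A *ᵥ u = v := by
    rw [hu, Matrix.mulVec_mulVec, hAinv, Matrix.one_mulVec]
  have hune : u ≠ 0 := by
    intro h; apply hv; rw [← hAu, h, Matrix.mulVec_zero]
  obtain ⟨i, hi'⟩ := Function.ne_iff.mp hune
  have hi : u i ≠ 0 := hi'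
  set w : Fin r → F := fun k => if k = i then -(u i)⁻¹ else 0 with hw
  refine ⟨w, fun hunit => ?_⟩
  have hdot : w ⬝ᵥ u = -1 := by
    simp only [hw, dotProduct, ite_mul, zero_mul, Finset.sum_ite_eq', Finset.mem_univ, if_true]
    rw [neg_mul, neg_eq_iff_eq_neg, neg_neg, inv_mul_cancel₀ hi]
  have hker : (A + vecMulVec v w) *ᵥ u = 0 := by
    rw [Matrix.add_mulVec, hAu, vecMulVec_mulVec', hdot]
    simp
  have hdet2 : IsUnit (A + vecMulVec v w).det := (Matrix.isUnit_iff_isUnit_det _).mp hunit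
  have h1 : (A + vecMulVec v w)⁻¹ * (A + vecMulVec v w) = 1 :=
    Matrix.nonsing_inv_mul _ hdet2
  have h2 := congrArg (fun t => (A + vecMulVec v w)⁻¹ *ᵥ t) hker
  simp only [Matrix.mulVec_mulVec, h1, Matrix.one_mulVec, Matrix.mulVec_zero] at h2
  exact hi (by rw [h2]; rfl)

/-- Sum over Fin n of a function vanishing above r equals the sum over Fin r. -/
lemma sum_castLE_s14 {F : Type} [Field F] {r n : ℕ} (hrn : r ≤ n) (f : Fin n → F)
    (hf : ∀ a : Fin n, r ≤ (a : ℕ) → f a = 0) :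
    ∑ a : Fin n, f a = ∑ j : Fin r, f (Fin.castLE hrn j) := by
  calc ∑ a : Fin n, f a
      = ∑ a ∈ Finset.univ.map ⟨Fin.castLE hrn, Fin.castLE_injective hrn⟩, f a := by
        apply (Finset.sum_subset (Finset.subset_univ _) ?_).symm
        intro a _ ha
        apply hf
        by_contra hlt
        push_neg at hlt
        exact ha (Finset.mem_map.mpr ⟨⟨(a : ℕ), hlt⟩, Finset.mem_univ _, by
          simp [Fin.ext_iff]⟩)
    _ = ∑ j : Fin r, f (Fin.castLE hrn j) := by
        rw [Finset.sum_map]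
        simp

/-- Over a field with more than 2 elements, with 1 ≤ r ≤ n,
if M and M' are optimal affine subspaces of r×r matrices such that M̃^(n) and
M̃'^(n) are equivalent, then M and M' are equivalent. -/
theorem stmt_14 (F : Type) [Field F] (n r : ℕ) (hr : 1 ≤ r) (hrn : r ≤ n)
    (hF : (2 : Cardinal) < Cardinal.mk F)
    (M M' : AffineSubspace F (Matrix (Fin r) (Fin r) F))
    (hM : IsOptimal M) (hM' : IsOptimal M')
    (hequiv : MatEquiv
      (tildeN hrn (M : Set (Matrix (Fin r) (Fin r) F)))
      (tildeN hrn (M' : Set (Matrix (Fin r) (Fin r) F)))) :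
    MatEquiv (M : Set (Matrix (Fin r) (Fin r) F)) (M' : Set (Matrix (Fin r) (Fin r) F)) := by
  obtain ⟨P, Q, hP, hQ, hset⟩ := hequiv
  have hQdet : IsUnit Q.det := (Matrix.isUnit_iff_isUnit_det Q).mp hQ
  have hmem : ∀ X ∈ tildeN hrn (M : Set (Matrix (Fin r) (Fin r) F)),
      topSub hrn (P * X * Q) ∈ M' := by
    intro X hX
    have hmem' : P * X * Q ∈ tildeN hrn (M' : Set (Matrix (Fin r) (Fin r) F)) := by
      rw [hset]; exact ⟨X, hX, rfl⟩
    exact hmem'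
  -- Step 1: the top-right block of P vanishes
  have hstep1 : ∀ a b : Fin n, (a : ℕ) < r → r ≤ (b : ℕ) → P a b = 0 := by
    intro a b halt hble
    by_contra hne
    obtain ⟨B0, hB0⟩ := hM.1
    have ha : Fin.castLE hrn ⟨(a : ℕ), halt⟩ = a := by simp [Fin.ext_iff]
    set v : Fin r → F := fun i => P (Fin.castLE hrn i) b with hv
    have hvne : v ≠ 0 := by
      intro h
      apply hne
      rw [← ha]
      exact congrFun h ⟨(a : ℕ), halt⟩
    have hX0 : extSub hrn B0 ∈ tildeN hrn (M : Set (Matrix (Fin r) (Fin r) F)) := by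
      show topSub hrn (extSub hrn B0) ∈ (M : Set (Matrix (Fin r) (Fin r) F))
      rw [myTop_ext]; exact hB0
    set A' := topSub hrn (P * extSub hrn B0 * Q) with hA'
    have hA'unit : IsUnit A' := hM'.2.1 _ (hmem _ hX0)
    have hall : ∀ w : Fin r → F, IsUnit (A' + vecMulVec v (w ᵥ* Q)) := by
      intro w
      set E : Matrix (Fin n) (Fin r) F := Matrix.of fun c k => if c = b then w k else 0 with hE
      have hEtop : topSub hrn E = 0 := by
        ext i j
        have hne2 : Fin.castLE hrn i ≠ b := by
          intro h
          have h' := congrArg Fin.val h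
          simp at h'
          omega
        simp [topSub, hE, hne2]
      have hXw : extSub hrn B0 + E ∈ tildeN hrn (M : Set (Matrix (Fin r) (Fin r) F)) := by
        show topSub hrn (extSub hrn B0 + E) ∈ (M : Set (Matrix (Fin r) (Fin r) F))
        rw [myTop_add, myTop_ext, hEtop, add_zero]
        exact hB0
      have hmem2 := hM'.2.1 _ (hmem _ hXw)
      have hPE : P * E = Matrix.of fun c k => P c b * w k := by
        ext c k
        simp [Matrix.mul_apply, hE, mul_ite, Finset.sum_ite_eq']
      have hcomp : topSub hrn (P * (extSub hrn B0 + E) * Q)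
          = A' + vecMulVec v (w ᵥ* Q) := by
        rw [Matrix.mul_add, Matrix.add_mul, myTop_add, hA']
        congr 1
        ext i c
        rw [hPE]
        simp only [topSub, Matrix.of_apply, Matrix.mul_apply, Matrix.vecMulVec_apply,
          Matrix.vecMul, dotProduct, hv, Finset.mul_sum]
        exact Finset.sum_congr rfl fun k _ => by ring
      rw [hcomp] at hmem2
      exact hmem2
    obtain ⟨w', hw'⟩ := aux_rank_one A' hA'unit v hvne
    apply hw'
    have hwQ : (w' ᵥ* Q⁻¹) ᵥ* Q = w' := by
      rw [Matrix.vecMul_vecMul, Matrix.nonsing_inv_mul Q hQdet, Matrix.vecMul_one]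
    rw [← hwQ]
    exact hall (w' ᵥ* Q⁻¹)
  -- the top-left block of P
  set P11 : Matrix (Fin r) (Fin r) F :=
    Matrix.of fun i j => P (Fin.castLE hrn i) (Fin.castLE hrn j) with hP11def
  -- Step 2: P11 is a unit
  have hadd : r + (n - r) = n := Nat.add_sub_cancel' hrn
  set g : Fin r ⊕ Fin (n - r) ≃ Fin n := finSumFinEquiv.trans (finCongr hadd) with hg
  have hgl : ∀ i : Fin r, g (Sum.inl i) = Fin.castLE hrn i := by
    intro i; apply Fin.ext; simp [hg]
  have hgrval : ∀ j : Fin (n - r), (g (Sum.inr j) : ℕ) = r + (j : ℕ) := by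
    intro j; simp [hg]
  have hP11unit : IsUnit P11 := by
    set P' := P.submatrix g g with hP'
    have hb12 : P'.toBlocks₁₂ = 0 := by
      ext i j
      simp only [Matrix.toBlocks₁₂, Matrix.of_apply, hP', Matrix.submatrix_apply,
        Matrix.zero_apply]
      apply hstep1
      · rw [hgl i]; exact i.isLt
      · rw [hgrval j]; omega
    have hb11 : P'.toBlocks₁₁ = P11 := by
      ext i j
      simp only [Matrix.toBlocks₁₁, Matrix.of_apply, hP', Matrix.submatrix_apply, hP11def]
      rw [hgl i, hgl j]
    have hdet' : P'.det = P11.det * P'.toBlocks₂₂.det := by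
      conv_lhs => rw [← Matrix.fromBlocks_toBlocks P', hb11, hb12]
      rw [Matrix.det_fromBlocks_zero₁₂]
    have hdetP : P.det = P11.det * P'.toBlocks₂₂.det := by
      rw [← Matrix.det_submatrix_equiv_self g P, ← hP', hdet']
    have hPdet : IsUnit P.det := (Matrix.isUnit_iff_isUnit_det P).mp hP
    rw [Matrix.isUnit_iff_isUnit_det, isUnit_iff_ne_zero]
    intro h0
    rw [hdetP, h0, zero_mul] at hPdet
    exact hPdet.ne_zero rfl
  -- Step 3: compatibility of topSub with the multiplication
  have htopmul : ∀ X : Matrix (Fin n) (Fin r) F,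
      topSub hrn (P * X * Q) = P11 * topSub hrn X * Q := by
    intro X
    ext i c
    simp only [topSub, Matrix.of_apply, Matrix.mul_apply]
    apply Finset.sum_congr rfl
    intro k _
    congr 1
    rw [sum_castLE_s14 hrn (fun a => P (Fin.castLE hrn i) a * X a k)
      (fun a ha => by
        show P (Fin.castLE hrn i) a * X a k = 0
        rw [hstep1 _ _ (by simpa using i.isLt) ha, zero_mul])]
    apply Finset.sum_congr rfl
    intro j _
    show P (Fin.castLE hrn i) (Fin.castLE hrn j) * X (Fin.castLE hrn j) k = _
    rw [hP11def]
    rfl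
  -- Conclusion
  refine ⟨P11, Q, hP11unit, hQ, ?_⟩
  ext B'
  constructor
  · intro hB'
    have hx : extSub hrn B' ∈ tildeN hrn (M' : Set (Matrix (Fin r) (Fin r) F)) := by
      show topSub hrn (extSub hrn B') ∈ (M' : Set (Matrix (Fin r) (Fin r) F))
      rw [myTop_ext]; exact hB'
    rw [hset] at hx
    obtain ⟨X, hX, hXeq⟩ := hx
    refine ⟨topSub hrn X, hX, ?_⟩
    have h2 := congrArg (topSub hrn) hXeq
    rw [htopmul X, myTop_ext] at h2
    exact h2
  · rintro ⟨B, hB, rfl⟩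
    have hx : extSub hrn B ∈ tildeN hrn (M : Set (Matrix (Fin r) (Fin r) F)) := by
      show topSub hrn (extSub hrn B) ∈ (M : Set (Matrix (Fin r) (Fin r) F))
      rw [myTop_ext]; exact hB
    have h3 := hmem _ hx
    rw [htopmul, myTop_ext] at h3
    exact h3
end

section
/- Let F be a field, n > 0, and M be a trivial spectrum linear subspace of n×n matrices over F. Then there exists an index i ∈ {1, …, n} such that the i-th standard basis vector e_i of F^n is M-adapted, i.e., M contains no nonzero matrix whose column space (range) equals the line F·e_i. -/
/-!
Suppose every `e_i` fails, witnessed by `A_i ∈ M` with range `F·e_i`; then `A_i = e_i b_iᵀ` with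
`b_i ≠ 0`. Draw an edge `i → j` whenever `b_i j ≠ 0`. Every vertex has an out-edge, so an
inclusion-minimal nonempty set `S` in which every vertex has an out-neighbour has the stronger
property that every vertex of `S` has exactly one out-neighbour in `S` (minimality forces every
choice of out-neighbours to permute `S`). For the indicator `x` of `S` each `b_t ⬝ᵥ x` with
`t ∈ S` is then a single nonzero entry, and `∑_{t ∈ S} (b_t ⬝ᵥ x)⁻¹ A_t ∈ M` fixes `x`,
contradicting the trivial spectrum.
-/

open Matrix

namespace Finset

variable {α : Type*} (r : α → α → Prop)

def HasSuccessors (S : Finset α) : Prop := ∀ t ∈ S, ∃ s ∈ S, r t s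

variable {r}

theorem surjOn_of_minimal_hasSuccessors {S : Finset α}
    (hS : Minimal (fun T : Finset α => T.Nonempty ∧ T.HasSuccessors r) S) {g : α → α}
    (hg : ∀ t ∈ S, g t ∈ S ∧ r t (g t)) : Set.SurjOn g S S := by
  classical
  intro s hs
  have hmaps : Set.MapsTo g S S := fun t ht => (hg t ht).1
  -- The forward orbit of `s` is a competitor, so by minimality it contains `s` itself.
  set O := S.filter fun x => ∃ k, g^[k + 1] s = x
  have hO : O.Nonempty ∧ O.HasSuccessors r := by
    refine ⟨⟨g s, mem_filter.2 ⟨(hg s hs).1, 0, rfl⟩⟩, fun x hx => ?_⟩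
    obtain ⟨hxS, k, rfl⟩ := mem_filter.1 hx
    refine ⟨g (g^[k + 1] s), mem_filter.2 ⟨(hg _ hxS).1, k + 1, ?_⟩, (hg _ hxS).2⟩
    rw [Function.iterate_succ_apply']
  obtain ⟨-, k, hk⟩ := mem_filter.1 (hS.2 hO (filter_subset _ S) hs)
  exact ⟨g^[k] s, hmaps.iterate k hs, by rwa [← Function.iterate_succ_apply' g k]⟩

theorem existsUnique_of_minimal_hasSuccessors {S : Finset α}
    (hS : Minimal (fun T : Finset α => T.Nonempty ∧ T.HasSuccessors r) S) {t : α}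
    (ht : t ∈ S) : ∃! s, s ∈ S ∧ r t s := by
  classical
  obtain ⟨u, hu, htu⟩ := hS.1.2 t ht
  refine ⟨u, ⟨hu, htu⟩, fun v ⟨hv, htv⟩ => ?_⟩
  have : Nonempty α := ⟨t⟩
  choose! g hg using hS.1.2
  have hupdate : ∀ w ∈ S, r t w → ∀ x ∈ S,
      Function.update g t w x ∈ S ∧ r x (Function.update g t w x) := by
    intro w hw htw x hx
    rcases eq_or_ne x t with rfl | hxt
    · simpa using ⟨hw, htw⟩
    · simpa [hxt] using hg x hx
  -- Both updates of `g` at `t` permute `S`; the one through `u` hits `v` at some `w`, and if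
  -- `w ≠ t` the one through `v` would not be injective.
  obtain ⟨w, hw, hwv⟩ := surjOn_of_minimal_hasSuccessors hS (hupdate u hu htu) hv
  by_contra hvu
  have hwt : w ≠ t := by
    rintro rfl
    exact hvu (by simpa using hwv.symm)
  have hinj := injOn_of_surjOn_of_card_le _ (fun x hx => (hupdate v hv htv x hx).1)
    (surjOn_of_minimal_hasSuccessors hS (hupdate v hv htv)) le_rfl
  refine hwt (hinj hw ht ?_)
  rw [Function.update_of_ne hwt] at hwv ⊢
  rwa [Function.update_self]

theorem exists_nonempty_forall_existsUnique [Fintype α] [Nonempty α]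
    (h : ∀ t, ∃ s, r t s) : ∃ S : Finset α, S.Nonempty ∧ ∀ t ∈ S, ∃! s, s ∈ S ∧ r t s := by
  obtain ⟨S, -, hS⟩ := exists_minimal_le_of_wellFoundedLT
    (fun T : Finset α => T.Nonempty ∧ T.HasSuccessors r) univ
    ⟨univ_nonempty, fun t _ => (h t).imp fun s hs => ⟨mem_univ s, hs⟩⟩
  exact ⟨S, hS.1.1, fun t ht => existsUnique_of_minimal_hasSuccessors hS ht⟩

end Finset

namespace Matrix

theorem eq_vecMulVec_single_of_range_le {m n R : Type*} [Fintype n] [DecidableEq m]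
    [CommSemiring R] {A : Matrix m n R} {i : m}
    (h : LinearMap.range A.mulVecLin ≤ Submodule.span R {Pi.single i 1}) :
    A = vecMulVec (Pi.single i 1) (A i) := by
  classical
  refine Matrix.ext fun j k => ?_
  rw [vecMulVec_apply]
  obtain ⟨c, hc⟩ := Submodule.mem_span_singleton.1 (h ⟨Pi.single k 1, rfl⟩)
  have hcol : A j k = c * (Pi.single i 1 : m → R) j := by
    simpa [mulVec_single_one] using congrFun hc.symm j
  rcases eq_or_ne j i with rfl | hji
  · simp
  · simp [hcol, Pi.single_eq_of_ne hji]

theorem mulVec_sum_smul_vecMulVec_single_eq_self {n F : Type*} [Fintype n] [DecidableEq n]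
    [Field F] (b : n → n → F) (x : n → F) (hx : ∀ t, x t ≠ 0 → b t ⬝ᵥ x ≠ 0) :
    (∑ t, (x t / (b t ⬝ᵥ x)) • vecMulVec (Pi.single t 1) (b t)) *ᵥ x = x := by
  rw [sum_mulVec]
  conv_rhs => rw [← Finset.univ_sum_single x]
  refine Finset.sum_congr rfl fun t _ => ?_
  rw [smul_mulVec, vecMulVec_mulVec, op_smul_eq_smul, smul_smul]
  rcases eq_or_ne (x t) 0 with hxt | hxt
  · simp [hxt]
  · rw [div_mul_cancel₀ _ (hx t hxt), ← Pi.single_smul, smul_eq_mul, mul_one]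

theorem dotProduct_indicator_ne_zero {n R : Type*} [Fintype n] [DecidableEq n] [Semiring R]
    {b : n → R} {S : Finset n} (h : ∃! s, s ∈ S ∧ b s ≠ 0) :
    b ⬝ᵥ (fun j => if j ∈ S then 1 else 0) ≠ 0 := by
  obtain ⟨s, ⟨hs, hbs⟩, huniq⟩ := h
  have hsum : b ⬝ᵥ (fun j => if j ∈ S then 1 else 0) = ∑ j ∈ S, b j := by
    simp [dotProduct, mul_ite, Finset.sum_ite_mem]
  rwa [hsum, Finset.sum_eq_single_of_mem s hs fun j hj hjs => not_not.1 fun hbj =>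
    hjs (huniq j ⟨hj, hbj⟩)]

end Matrix

/-- If M is a trivial spectrum linear subspace of n×n matrices
over a field F (no element of M has a nonzero eigenvalue in F), then some
standard basis vector e_i of F^n is M-adapted, i.e. M contains no nonzero
matrix whose column space equals the line F·e_i. -/
theorem stmt_16 (F : Type) [Field F] (n : ℕ) (hn : 0 < n)
    (M : Submodule F (Matrix (Fin n) (Fin n) F))
    (hM : ∀ A ∈ M, ∀ μ : F, μ ≠ 0 → ∀ X : Fin n → F, A.mulVec X = μ • X → X = 0) :
    ∃ i : Fin n, ∀ A ∈ M, A ≠ 0 →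
      LinearMap.range A.mulVecLin ≠ Submodule.span F {Pi.single i (1 : F)} := by
  classical
  by_contra! h
  choose A hAM hA0 hrange using h
  have hA (i : Fin n) : A i = vecMulVec (Pi.single i 1) (A i i) :=
    eq_vecMulVec_single_of_range_le (hrange i).le
  have : Nonempty (Fin n) := ⟨⟨0, hn⟩⟩
  obtain ⟨S, ⟨s, hs⟩, hS⟩ := Finset.exists_nonempty_forall_existsUnique
    (r := fun i j => A i i j ≠ 0) fun i => by
      by_contra! hi
      exact hA0 i (by rw [hA i, show A i i = 0 from funext hi, vecMulVec_zero])
  set x : Fin n → F := fun j => if j ∈ S then 1 else 0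
  have hx (t : Fin n) (ht : x t ≠ 0) : A t t ⬝ᵥ x ≠ 0 :=
    dotProduct_indicator_ne_zero (hS t (by by_contra h; simp [x, h] at ht))
  have hCM : ∑ t, (x t / (A t t ⬝ᵥ x)) • vecMulVec (Pi.single t 1) (A t t) ∈ M :=
    M.sum_mem fun t _ => M.smul_mem _ (hA t ▸ hAM t)
  have hx0 : x = 0 := hM _ hCM 1 one_ne_zero x
    (by rw [one_smul, mulVec_sum_smul_vecMulVec_single_eq_self _ x hx])
  simpa [x, hs] using congrFun hx0 s
end

section
/- Let F be a field and V be a finite-dimensional vector space over F with dim V ≥ 1. Let S be a trivial spectrum linear subspace of End(V). Then there exists a linear hyperplane H of V (a linear subspace of codimension 1) such that every vector x ∈ V with x ∉ H is S-adapted. -/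
/-!
Suppose the vectors that are not `S`-adapted span `V`, and pick a basis `b i` among them. Each
`b i` is the range of a rank-one map `(ψ i).smulRight (b i) ∈ S` with `ψ i ≠ 0`. In the digraph
with an edge `i → j` whenever `ψ i (b j) ≠ 0` every vertex has an out-neighbour, so a shortest
cycle `T` has no chords: each `i ∈ T` has exactly one out-neighbour `σ i` in `T`. Then
`∑ i ∈ T, (ψ i (b (σ i)))⁻¹ • (ψ i).smulRight (b i) ∈ S` fixes the nonzero vector
`∑ i ∈ T, b i`, contradicting trivial spectrum. So these vectors lie in a hyperplane.
-/

open Submodule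

section ClosedWalk

variable {ι : Type*} {E : ι → ι → Prop}

def IsClosedWalk (E : ι → ι → Prop) {n : ℕ} (c : ZMod (n + 1) → ι) : Prop :=
  ∀ j, E (c j) (c (j + 1))

lemma ZMod.val_add_one' {n : ℕ} (j : ZMod (n + 1)) : (j + 1).val = (j.val + 1) % (n + 1) := by
  rw [ZMod.val_add, ZMod.val_one_eq_one_mod, Nat.add_mod_mod]

theorem Function.exists_mem_periodicPts {α : Type*} [Finite α] [Nonempty α] (g : α → α) :
    ∃ y, y ∈ Function.periodicPts g := by
  set x := Classical.arbitrary α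
  have periodic : ∀ m m', m < m' → g^[m] x = g^[m'] x → g^[m] x ∈ Function.periodicPts g :=
    fun m m' hlt heq => Function.mk_mem_periodicPts (Nat.sub_pos_of_lt hlt) <| by
      rw [Function.IsPeriodicPt, Function.IsFixedPt, ← Function.iterate_add_apply,
        Nat.sub_add_cancel hlt.le, heq]
  obtain ⟨m, m', hne, heq⟩ := Finite.exists_ne_map_eq_of_infinite (g^[·] x)
  rcases lt_or_gt_of_ne hne with hlt | hlt
  · exact ⟨_, periodic m m' hlt heq⟩
  · exact ⟨_, periodic m' m hlt heq.symm⟩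

theorem exists_isClosedWalk [Finite ι] [Nonempty ι] (h : ∀ i, ∃ j, E i j) :
    ∃ n, ∃ c : ZMod (n + 1) → ι, IsClosedWalk E c := by
  choose g hg using h
  obtain ⟨y, hy⟩ := Function.exists_mem_periodicPts g
  obtain ⟨n, hn⟩ := Nat.exists_eq_add_one_of_ne_zero
    (Function.minimalPeriod_pos_of_mem_periodicPts hy).ne'
  refine ⟨n, fun j => g^[j.val] y, fun j => ?_⟩
  simp only [ZMod.val_add_one', ← hn, Function.iterate_mod_minimalPeriod_eq,
    Function.iterate_succ_apply']
  exact hg _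

/-- A chord `c a → c 0` closes the initial segment `c 0, …, c a` into a closed walk. -/
theorem IsClosedWalk.shortcut {n : ℕ} {c : ZMod (n + 1) → ι} (hc : IsClosedWalk E c)
    (a : ZMod (n + 1)) (h : E (c a) (c 0)) :
    ∃ c' : ZMod (a.val + 1) → ι, IsClosedWalk E c' := by
  refine ⟨fun m => c (m.val : ZMod (n + 1)), fun m => ?_⟩
  rcases Nat.lt_succ_iff_lt_or_eq.mp m.val_lt with hm | hm
  · have hval : (m + 1).val = m.val + 1 := by
      rw [ZMod.val_add_one', Nat.mod_eq_of_lt (Nat.succ_lt_succ hm)]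
    simpa only [hval, Nat.cast_succ] using hc _
  · have hval : (m + 1).val = 0 := by rw [ZMod.val_add_one', hm, Nat.mod_self]
    simpa only [hval, hm, ZMod.natCast_zmod_val, Nat.cast_zero] using h

theorem IsClosedWalk.eq_add_one_of_minimal {n : ℕ} {c : ZMod (n + 1) → ι}
    (hc : IsClosedWalk E c) (hmin : ∀ m < n, ∀ c' : ZMod (m + 1) → ι, ¬IsClosedWalk E c')
    {a b : ZMod (n + 1)} (h : E (c a) (c b)) : b = a + 1 := by
  have hrot : IsClosedWalk E (fun j => c (j + b)) := fun j => by
    simpa only [add_right_comm] using hc (j + b)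
  obtain ⟨c', hc'⟩ := hrot.shortcut (a - b) (by simpa only [sub_add_cancel, zero_add] using h)
  have hval : (a - b).val = n :=
    le_antisymm (Nat.lt_succ_iff.mp (ZMod.val_lt _)) (not_lt.mp fun hlt => hmin _ hlt c' hc')
  have hsub : a - b + 1 = 0 := by
    rw [← ZMod.natCast_zmod_val (a - b), hval, ← Nat.cast_succ, ZMod.natCast_self]
  linear_combination -hsub

/-- `T` is the vertex set of a shortest cycle. -/
theorem exists_finset_forall_existsUnique [Finite ι] [Nonempty ι] (E : ι → ι → Prop)
    (h : ∀ i, ∃ j, E i j) : ∃ T : Finset ι, T.Nonempty ∧ ∀ i ∈ T, ∃! j, j ∈ T ∧ E i j := by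
  classical
  have hex : ∃ n, ∃ c : ZMod (n + 1) → ι, IsClosedWalk E c := exists_isClosedWalk h
  obtain ⟨c, hc⟩ := Nat.find_spec hex
  have hmin : ∀ m < Nat.find hex, ∀ c' : ZMod (m + 1) → ι, ¬IsClosedWalk E c' :=
    fun m hm c' hc' => Nat.find_min hex hm ⟨c', hc'⟩
  refine ⟨Finset.univ.image c, Finset.univ_nonempty.image c, ?_⟩
  simp only [Finset.mem_image, Finset.mem_univ, true_and]
  rintro _ ⟨a, rfl⟩
  refine ⟨c (a + 1), ⟨⟨a + 1, rfl⟩, hc a⟩, ?_⟩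
  rintro _ ⟨⟨b, rfl⟩, hab⟩
  rw [hc.eq_add_one_of_minimal hmin hab]

end ClosedWalk

section TrivialSpectrum

variable {F V W : Type*} [Field F] [AddCommGroup V] [Module F V] [AddCommGroup W] [Module F W]

def HasTrivialSpectrum (S : Submodule F (V →ₗ[F] V)) : Prop :=
  ∀ f ∈ S, ∀ μ : F, μ ≠ 0 → ∀ x : V, f x = μ • x → x = 0

/-- The nonzero vectors that are not `S`-adapted. -/
def nonAdapted (S : Submodule F (V →ₗ[F] V)) : Set V :=
  {x | ∃ f ∈ S, f ≠ 0 ∧ LinearMap.range f = span F {x}}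

theorem LinearMap.exists_eq_smulRight_of_range_le (f : V →ₗ[F] W) {x : W}
    (h : LinearMap.range f ≤ span F {x}) : ∃ ψ : Module.Dual F V, f = ψ.smulRight x := by
  by_cases hx : x = 0
  · subst hx
    refine ⟨0, ?_⟩
    rw [span_singleton_eq_bot.mpr rfl, le_bot_iff, LinearMap.range_eq_bot] at h
    rw [h, LinearMap.zero_smulRight]
  have hmem : ∀ v, f v ∈ span F {x} := fun v => h (LinearMap.mem_range_self f v)
  refine ⟨(LinearEquiv.coord F W x hx).toLinearMap ∘ₗ f.codRestrict _ hmem, ?_⟩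
  ext v
  exact (LinearEquiv.coord_apply_smul F W x hx ⟨f v, hmem v⟩).symm

theorem exists_smulRight_mem_of_mem_nonAdapted {S : Submodule F (V →ₗ[F] V)} {x : V}
    (hx : x ∈ nonAdapted S) : ∃ ψ : Module.Dual F V, ψ ≠ 0 ∧ ψ.smulRight x ∈ S := by
  obtain ⟨f, hfS, hf0, hrange⟩ := hx
  obtain ⟨ψ, rfl⟩ := f.exists_eq_smulRight_of_range_le hrange.le
  exact ⟨ψ, fun hψ => hf0 (by rw [hψ, LinearMap.zero_smulRight]), hfS⟩

/-- If inside `T` the relation `ψ i (b j) ≠ 0` is the graph of a function `σ`, rescaling the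
rank-one maps `(ψ i).smulRight (b i)` by `(ψ i (b (σ i)))⁻¹` makes their sum fix `∑ i ∈ T, b i`. -/
theorem exists_sum_smulRight_apply_eq_self {ι : Type*} {b : ι → V} (hb : LinearIndependent F b)
    (ψ : ι → Module.Dual F V) {T : Finset ι} (hT : T.Nonempty)
    (huniq : ∀ i ∈ T, ∃! j, j ∈ T ∧ ψ i (b j) ≠ 0) :
    ∃ (a : ι → F) (v : V), v ≠ 0 ∧ (∑ i ∈ T, a i • (ψ i).smulRight (b i)) v = v := by
  classical
  choose σ hσ hσuniq using huniq
  refine ⟨fun i => if hi : i ∈ T then (ψ i (b (σ i hi)))⁻¹ else 0, ∑ i ∈ T, b i, ?_, ?_⟩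
  · intro hv
    have := linearIndependent_iff'.mp hb T (fun _ => 1) (by simpa only [one_smul] using hv)
    exact one_ne_zero (this _ hT.choose_spec)
  have hψ : ∀ i (hi : i ∈ T), ψ i (∑ j ∈ T, b j) = ψ i (b (σ i hi)) := fun i hi => by
    rw [map_sum, Finset.sum_eq_single_of_mem _ (hσ i hi).1]
    exact fun j hj hne => not_not.mp fun h => hne (hσuniq i hi j ⟨hj, h⟩)
  rw [LinearMap.sum_apply]
  refine Finset.sum_congr rfl fun i hi => ?_
  simp only [LinearMap.smul_apply, LinearMap.smulRight_apply, hψ i hi, dif_pos hi, smul_smul,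
    inv_mul_cancel₀ (hσ i hi).2, one_smul]

theorem span_nonAdapted_ne_top [FiniteDimensional F V] [Nontrivial V]
    {S : Submodule F (V →ₗ[F] V)} (hS : HasTrivialSpectrum S) : span F (nonAdapted S) ≠ ⊤ := by
  intro htop
  obtain ⟨B, hBsub, hBspan, hBli⟩ := exists_linearIndependent F (nonAdapted S)
  rw [htop] at hBspan
  have : Finite B := hBli.finite
  have : Nonempty B := by
    by_contra hB
    rw [not_nonempty_iff, Set.isEmpty_coe_sort] at hB
    rw [hB, span_empty] at hBspan
    exact bot_ne_top hBspan
  choose ψ hψ0 hψS using fun x : B => exists_smulRight_mem_of_mem_nonAdapted (hBsub x.2)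
  have hout : ∀ i : B, ∃ j : B, ψ i j ≠ 0 := fun i => by
    by_contra! h
    exact hψ0 i (LinearMap.ext_on hBspan fun x hx => h ⟨x, hx⟩)
  obtain ⟨T, hT, huniq⟩ := exists_finset_forall_existsUnique _ hout
  obtain ⟨a, v, hv0, hfix⟩ := exists_sum_smulRight_apply_eq_self hBli ψ hT huniq
  have hmem : ∑ i ∈ T, a i • (ψ i).smulRight (i : V) ∈ S :=
    sum_mem fun i _ => S.smul_mem _ (hψS i)
  exact hv0 (hS _ hmem 1 one_ne_zero v (by rw [one_smul, hfix]))

end TrivialSpectrum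

/-- Let V be a finite-dimensional vector space over a field F
with dim V ≥ 1, and S a trivial spectrum linear subspace of End(V). Then there
is a linear hyperplane H of V (here given as the kernel of a nonzero linear
functional) such that every x ∈ V outside H is S-adapted, i.e. S contains no
nonzero endomorphism whose range equals the line F·x. -/
theorem stmt_17 (F V : Type) [Field F] [AddCommGroup V] [Module F V]
    [FiniteDimensional F V] (hV : 1 ≤ Module.finrank F V)
    (S : Submodule F (V →ₗ[F] V))
    (hS : ∀ f ∈ S, ∀ μ : F, μ ≠ 0 → ∀ x : V, f x = μ • x → x = 0) :
    ∃ φ : V →ₗ[F] F, φ ≠ 0 ∧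
      ∀ x : V, x ∉ LinearMap.ker φ →
        ∀ f ∈ S, f ≠ 0 → LinearMap.range f ≠ Submodule.span F {x} := by
  have : Nontrivial V := Module.nontrivial_of_finrank_pos hV
  obtain ⟨φ, hφ0, hle⟩ := exists_le_ker_of_lt_top _ (span_nonAdapted_ne_top hS).lt_top
  exact ⟨φ, hφ0, fun x hx f hf hf0 hrange => hx (hle (subset_span ⟨f, hf, hf0, hrange⟩))⟩
end

section
/- Let F be a field, n > r > 0 be integers, r = s + t with s, t ≥ 0, and let M and N be optimal affine subspaces of t×t and s×s matrices over F respectively. Set S := M ∧_{n,n} N, and let (e₁, …, e_n) be the standard basis of F^n, F₀ := span(e_{s+1}, …, e_n), G₀ := span(e_{t+1}, …, e_n). If F' and G' are linear subspaces of F^n such that XᵀMY = 0 for all X ∈ F', Y ∈ G' and M ∈ S, and dim F' + dim G' = 2n − r, then F' = F₀ and G' = G₀. -/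
open Matrix

/-!
Every `A ∈ M ∧ N` maps `G'` into the dot-product orthogonal of `F'`, so
`dim F' + dim G' ≤ n + dim (G' ∩ ker A)`; hence `dim F' + dim G' = 2n - r` forces
`ker A ⊆ G'` as soon as `dim ker A ≤ n - r`. For invertible `M₀ ∈ M`, `N₀ ∈ N` and `k = r`
(0-based), the matrices `A_c = [[0, N₀, c e_kᵀ], [M₀, 0, 0], [0, 0, 0]]` have
`(n - r)`-dimensional kernels which, as `c` varies, span `G₀`; so `G₀ ⊆ G'`, and transposing
gives `F₀ ⊆ F'`. Since `dim F₀ + dim G₀ = 2n - r`, both inclusions are equalities.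
-/

open Module Function

theorem LinearMap.BilinForm.ker_le_of_le_orthogonal {K V : Type*} [Field K] [AddCommGroup V]
    [Module K V] [FiniteDimensional K V] {B : LinearMap.BilinForm K V} {W U : Submodule K V}
    (hU : U ≤ B.orthogonal W)
    (hdim : finrank K V + finrank K (LinearMap.ker B) ≤ finrank K W + finrank K U) :
    LinearMap.ker B ≤ W := by
  have hsum := finrank_add_finrank_orthogonal' (B := B) W
  have hUle := Submodule.finrank_mono hU
  have : W ⊓ LinearMap.ker B = LinearMap.ker B :=
    Submodule.eq_of_le_of_finrank_le inf_le_right (by omega)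
  exact this ▸ inf_le_left

theorem Matrix.ker_mulVecLin_le_of_dotProduct_mulVec_eq_zero {K ι : Type*} [Field K] [Fintype ι]
    [DecidableEq ι] (A : Matrix ι ι K) {F' G' : Submodule K (ι → K)}
    (horth : ∀ X ∈ F', ∀ Y ∈ G', X ⬝ᵥ A *ᵥ Y = 0)
    (hdim : Fintype.card ι + finrank K (LinearMap.ker A.mulVecLin) ≤
      finrank K F' + finrank K G') :
    LinearMap.ker A.mulVecLin ≤ G' := by
  have hB X Y : toBilin' Aᵀ Y X = X ⬝ᵥ A *ᵥ Y := by
    rw [toBilin'_apply', dotProduct_transpose_mulVec]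
  have hker : LinearMap.ker (toBilin' Aᵀ) = LinearMap.ker A.mulVecLin := by
    ext Y
    simp only [LinearMap.mem_ker, LinearMap.ext_iff, hB, LinearMap.zero_apply, mulVecLin_apply]
    rw [← dotProduct_eq_zero_iff]
    simp only [dotProduct_comm (A *ᵥ Y)]
  rw [← hker]
  refine LinearMap.BilinForm.ker_le_of_le_orthogonal (U := F') (fun X hX => ?_) ?_
  · exact LinearMap.BilinForm.mem_orthogonal_iff.mpr fun Y hY => (hB X Y).trans (horth X hX Y hY)
  · rwa [hker, finrank_pi, add_comm (finrank K G')]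

theorem Submodule.eq_and_eq_of_le_of_le_of_finrank_add_le {K V : Type*} [DivisionRing K]
    [AddCommGroup V] [Module K V] [FiniteDimensional K V] {A A' B B' : Submodule K V}
    (hA : A ≤ A') (hB : B ≤ B')
    (h : finrank K A' + finrank K B' ≤ finrank K A + finrank K B) :
    A = A' ∧ B = B' := by
  have := Submodule.finrank_mono hA
  have := Submodule.finrank_mono hB
  exact ⟨eq_of_le_of_finrank_le hA (by omega), eq_of_le_of_finrank_le hB (by omega)⟩

theorem Function.extend_add_extend_eq_zero_iff {α β γ R : Type*} [AddMonoid R] {f : α → γ}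
    {g : β → γ} (hf : Injective f) (hg : Injective g)
    (hfg : Disjoint (Set.range f) (Set.range g)) {x : α → R} {y : β → R} :
    extend f x 0 + extend g y 0 = 0 ↔ x = 0 ∧ y = 0 := by
  refine ⟨fun h => ⟨funext fun a => ?_, funext fun b => ?_⟩, fun ⟨hx, hy⟩ => ?_⟩
  · have := congrFun h (f a)
    rwa [Pi.add_apply, hf.extend_apply, extend_apply' _ _ _ (hfg.notMem_of_mem_left ⟨a, rfl⟩),
      Pi.zero_apply, add_zero] at this
  · have := congrFun h (g b)
    rwa [Pi.add_apply, hg.extend_apply, extend_apply' _ _ _ (hfg.notMem_of_mem_right ⟨b, rfl⟩),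
      Pi.zero_apply, zero_add] at this
  · rw [hx, hy, extend_zero, extend_zero, add_zero]

namespace Fin

def offset {a n : ℕ} (k : ℕ) (h : k + a ≤ n) (x : Fin a) : Fin n := ⟨k + x, by omega⟩

variable {a n k : ℕ} {h : k + a ≤ n}

theorem offset_injective : Injective (offset k h) :=
  fun x y hxy => Fin.ext (by simpa [offset] using hxy)

theorem mem_range_offset {i : Fin n} :
    i ∈ Set.range (offset k h) ↔ k ≤ i ∧ (i : ℕ) < k + a :=
  ⟨by rintro ⟨x, rfl⟩; simp [offset],
    fun hi => ⟨⟨i - k, by omega⟩, Fin.ext (by simp [offset]; omega)⟩⟩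

end Fin

namespace Matrix

variable {m n ι κ R : Type*}

noncomputable def embedBlock [Zero R] (f : m → ι) (g : n → κ) (B : Matrix m n R) :
    Matrix ι κ R :=
  of fun i j => extend f (fun a => extend g (B a) 0 j) 0 i

section Zero

variable [Zero R] {f : m → ι} {g : n → κ} (B : Matrix m n R)

theorem embedBlock_apply_apply (hf : Injective f) (hg : Injective g) (a : m) (b : n) :
    embedBlock f g B (f a) (g b) = B a b := by
  simp only [embedBlock, of_apply, hf.extend_apply, hg.extend_apply]

theorem embedBlock_apply_of_notMem_range_left {i : ι} (hi : i ∉ Set.range f) (j : κ) :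
    embedBlock f g B i j = 0 := by
  simp only [embedBlock, of_apply]
  exact extend_apply' _ _ _ hi

theorem embedBlock_apply_of_notMem_range_right (hf : Injective f) (i : ι) {j : κ}
    (hj : j ∉ Set.range g) : embedBlock f g B i j = 0 := by
  rcases em (i ∈ Set.range f) with ⟨a, rfl⟩ | hi
  · simp only [embedBlock, of_apply, hf.extend_apply]
    exact extend_apply' _ _ _ hj
  · exact embedBlock_apply_of_notMem_range_left B hi j

theorem transpose_embedBlock (hf : Injective f) (hg : Injective g) :
    (embedBlock f g B)ᵀ = embedBlock g f Bᵀ := by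
  ext j i
  rw [transpose_apply]
  rcases em (i ∈ Set.range f) with ⟨a, rfl⟩ | hi
  · rcases em (j ∈ Set.range g) with ⟨b, rfl⟩ | hj
    · rw [embedBlock_apply_apply _ hf hg, embedBlock_apply_apply _ hg hf, transpose_apply]
    · rw [embedBlock_apply_of_notMem_range_right _ hf _ hj,
        embedBlock_apply_of_notMem_range_left _ hj]
  · rw [embedBlock_apply_of_notMem_range_left _ hi,
      embedBlock_apply_of_notMem_range_right _ hg _ hi]

end Zero

theorem embedBlock_mulVec [NonUnitalNonAssocSemiring R] [Fintype n] [Fintype κ] {f : m → ι}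
    {g : n → κ} (hf : Injective f) (hg : Injective g) (B : Matrix m n R) (v : κ → R) :
    embedBlock f g B *ᵥ v = extend f (B *ᵥ (v ∘ g)) 0 := by
  ext i
  rcases em (i ∈ Set.range f) with ⟨a, rfl⟩ | hi
  · simp only [mulVec, dotProduct, hf.extend_apply]
    refine (Fintype.sum_of_injective g hg _ _ (fun j hj => ?_) fun b => ?_).symm
    · rw [embedBlock_apply_of_notMem_range_right _ hf _ hj, zero_mul]
    · rw [embedBlock_apply_apply _ hf hg]; rfl
  · simp only [mulVec, dotProduct]
    rw [extend_apply' _ _ _ hi]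
    exact Finset.sum_eq_zero fun j _ => by
      rw [embedBlock_apply_of_notMem_range_left _ hi, zero_mul]

end Matrix

section VanishingBelow

variable (F : Type*) [Field F] {n k : ℕ}

def vanishingBelow (hk : k ≤ n) : Submodule F (Fin n → F) :=
  LinearMap.ker (LinearMap.funLeft F F (Fin.castLE hk))

variable {F}

theorem mem_vanishingBelow {hk : k ≤ n} {X : Fin n → F} :
    X ∈ vanishingBelow F hk ↔ ∀ i : Fin n, (i : ℕ) < k → X i = 0 := by
  simp only [vanishingBelow, LinearMap.mem_ker, funext_iff, LinearMap.funLeft_apply,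
    Pi.zero_apply]
  exact ⟨fun h i hi => h ⟨i, hi⟩, fun h a => h _ a.2⟩

theorem finrank_vanishingBelow (hk : k ≤ n) : finrank F (vanishingBelow F hk) = n - k := by
  have hsurj := LinearMap.funLeft_surjective_of_injective F F _ (Fin.castLE_injective hk)
  have := LinearMap.finrank_range_add_finrank_ker (LinearMap.funLeft F F (Fin.castLE hk))
  rw [LinearMap.range_eq_top.mpr hsurj, finrank_top, finrank_fin_fun, finrank_fin_fun] at this
  rw [vanishingBelow]
  omega

end VanishingBelow

section WedgeWitness

variable {F : Type*} [Field F] {n s t : ℕ} (hn : s + t ≤ n) (k : Fin n)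
  (M₀ : Matrix (Fin t) (Fin t) F) (N₀ : Matrix (Fin s) (Fin s) F)

/-- The matrix `[[0, N₀, c e_kᵀ], [M₀, 0, 0], [e_k dᵀ, 0, 0]]` in the block structure of
`M ∧_{n,n} N`. -/
noncomputable def wedgeWitness (c : Fin s → F) (d : Fin t → F) : Matrix (Fin n) (Fin n) F :=
  embedBlock (Fin.castLE (by omega)) (Fin.offset t (by omega)) N₀ +
    embedBlock (Fin.offset s hn) (Fin.castLE (by omega)) M₀ +
    embedBlock (Fin.castLE (by omega)) (fun _ : Unit => k) (replicateCol Unit c) +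
    embedBlock (fun _ : Unit => k) (Fin.castLE (by omega)) (replicateRow Unit d)

theorem transpose_wedgeWitness (c : Fin s → F) (d : Fin t → F) :
    (wedgeWitness hn k M₀ N₀ c d)ᵀ =
      wedgeWitness ((add_comm t s).trans_le hn) k N₀ᵀ M₀ᵀ d c := by
  simp only [wedgeWitness, transpose_add, transpose_replicateCol, transpose_replicateRow,
    transpose_embedBlock _ (Fin.castLE_injective _) Fin.offset_injective,
    transpose_embedBlock _ Fin.offset_injective (Fin.castLE_injective _),
    transpose_embedBlock _ (Fin.castLE_injective _) (injective_of_subsingleton _),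
    transpose_embedBlock _ (injective_of_subsingleton _) (Fin.castLE_injective _)]
  abel

variable {k M₀ N₀}

theorem wedgeWitness_mulVec_eq_zero_iff {c : Fin s → F} {v : Fin n → F} :
    wedgeWitness hn k M₀ N₀ c 0 *ᵥ v = 0 ↔
      N₀ *ᵥ (v ∘ Fin.offset t (by omega)) + v k • c = 0 ∧
        M₀ *ᵥ (v ∘ Fin.castLE (by omega)) = 0 := by
  have hs : Injective (Fin.castLE (by omega : s ≤ n)) := Fin.castLE_injective _
  have ht : Injective (Fin.castLE (by omega : t ≤ n)) := Fin.castLE_injective _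
  have hc : replicateCol Unit c *ᵥ (v ∘ fun _ => k) = v k • c := by
    ext a
    simp [mulVec, dotProduct, mul_comm]
  simp only [wedgeWitness, add_mulVec, embedBlock_mulVec hs Fin.offset_injective,
    embedBlock_mulVec Fin.offset_injective ht, embedBlock_mulVec hs (injective_of_subsingleton _),
    embedBlock_mulVec (injective_of_subsingleton _) ht, replicateRow_zero, zero_mulVec,
    extend_zero, add_zero, hc]
  rw [add_right_comm, ← extend_add, add_zero]
  refine extend_add_extend_eq_zero_iff hs Fin.offset_injective ?_
  rw [Set.disjoint_left]
  rintro _ ⟨a, rfl⟩ ⟨b, hb⟩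
  simp [Fin.ext_iff, Fin.offset] at hb
  omega

theorem finrank_ker_wedgeWitness_le (hM₀ : IsUnit M₀) (hN₀ : IsUnit N₀) (hk : s + t ≤ k)
    (c : Fin s → F) :
    finrank F (LinearMap.ker (wedgeWitness hn k M₀ N₀ c 0).mulVecLin) ≤ n - (s + t) := by
  set K := LinearMap.ker (wedgeWitness hn k M₀ N₀ c 0).mulVecLin
  have hmid : t + s ≤ n := by omega
  have htail : s + t + (n - (s + t)) ≤ n := by omega
  let π := LinearMap.funLeft F F (Fin.offset (s + t) htail)
  suffices h : ∀ v ∈ K, π v = 0 → v = 0 by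
    have hinj : Injective (π ∘ₗ K.subtype) := by
      rw [← LinearMap.ker_eq_bot, Submodule.eq_bot_iff]
      exact fun v hv => Subtype.ext (h v v.2 hv)
    simpa using LinearMap.finrank_le_finrank_of_injective hinj
  intro v hv hπv
  have hvk : v k = 0 := by
    obtain ⟨x, rfl⟩ := (Fin.mem_range_offset (h := htail)).mpr ⟨hk, by omega⟩
    exact congrFun hπv x
  rw [LinearMap.mem_ker, mulVecLin_apply, wedgeWitness_mulVec_eq_zero_iff, hvk, zero_smul,
    add_zero, ← mulVec_zero N₀, ← mulVec_zero M₀] at hv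
  have hv_mid := mulVec_injective_iff_isUnit.mpr hN₀ hv.1
  have hv_low := mulVec_injective_iff_isUnit.mpr hM₀ hv.2
  funext j
  rcases lt_or_ge (j : ℕ) t with hj | hj
  · exact congrFun hv_low ⟨j, hj⟩
  rcases lt_or_ge (j : ℕ) (t + s) with hj' | hj'
  · obtain ⟨x, rfl⟩ := (Fin.mem_range_offset (h := hmid)).mpr ⟨hj, hj'⟩
    exact congrFun hv_mid x
  · obtain ⟨x, rfl⟩ :=
      (Fin.mem_range_offset (h := htail) (i := j)).mpr ⟨by omega, by omega⟩
    exact congrFun hπv x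

theorem vanishingBelow_le_of_dotProduct_wedgeWitness_mulVec_eq_zero (hM₀ : IsUnit M₀)
    (hN₀ : IsUnit N₀) (hk : s + t ≤ k) {F' G' : Submodule F (Fin n → F)}
    (horth : ∀ c, ∀ X ∈ F', ∀ Y ∈ G', X ⬝ᵥ wedgeWitness hn k M₀ N₀ c 0 *ᵥ Y = 0)
    (hdim : 2 * n ≤ finrank F F' + finrank F G' + (s + t)) :
    vanishingBelow F (le_of_add_le_right hn) ≤ G' := by
  have hker c : LinearMap.ker (wedgeWitness hn k M₀ N₀ c 0).mulVecLin ≤ G' := by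
    refine ker_mulVecLin_le_of_dotProduct_mulVec_eq_zero _ (horth c) ?_
    have := finrank_ker_wedgeWitness_le hn hM₀ hN₀ hk c
    rw [Fintype.card_fin]
    omega
  have hk_mid : k ∉ Set.range (Fin.offset t (by omega : t + s ≤ n)) := by
    rw [Fin.mem_range_offset]
    omega
  have hk_low : k ∉ Set.range (Fin.castLE (by omega : t ≤ n)) := by
    rw [Fin.range_castLE]
    simp only [Set.mem_ofPred_eq, not_lt]
    omega
  intro Y hY
  rw [mem_vanishingBelow] at hY
  have hY_low : Y ∘ Fin.castLE (by omega : t ≤ n) = 0 := funext fun a => hY _ a.2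
  have hupdate : update Y k 1 ∈ LinearMap.ker
      (wedgeWitness hn k M₀ N₀ (-(N₀ *ᵥ (Y ∘ Fin.offset t (by omega)))) 0).mulVecLin := by
    rw [LinearMap.mem_ker, mulVecLin_apply, wedgeWitness_mulVec_eq_zero_iff,
      update_comp_eq_of_notMem_range _ _ hk_mid, update_comp_eq_of_notMem_range _ _ hk_low,
      update_self, one_smul, add_neg_cancel, hY_low, mulVec_zero]
    exact ⟨rfl, rfl⟩
  have hsingle : update (0 : Fin n → F) k 1 ∈
      LinearMap.ker (wedgeWitness hn k M₀ N₀ 0 0).mulVecLin := by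
    rw [LinearMap.mem_ker, mulVecLin_apply, wedgeWitness_mulVec_eq_zero_iff,
      update_comp_eq_of_notMem_range _ _ hk_mid, update_comp_eq_of_notMem_range _ _ hk_low]
    simp
  have hY_eq : Y = update Y k 1 + (Y k - 1) • update (0 : Fin n → F) k 1 := by
    ext j
    rcases eq_or_ne j k with rfl | hj
    · simp
    · simp [hj]
  rw [hY_eq]
  exact G'.add_mem (hker _ hupdate) (G'.smul_mem _ (hker 0 hsingle))

end WedgeWitness

theorem wedgeWitness_mem_wedge {F : Type} [Field F] {n s t : ℕ} (hn : s + t ≤ n) {k : Fin n}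
    {M₀ : Matrix (Fin t) (Fin t) F} {N₀ : Matrix (Fin s) (Fin s) F}
    {Ms : Set (Matrix (Fin t) (Fin t) F)} {Ns : Set (Matrix (Fin s) (Fin s) F)}
    (hk : s + t ≤ k) (hM₀ : M₀ ∈ Ms) (hN₀ : N₀ ∈ Ns) (c : Fin s → F) (d : Fin t → F) :
    wedgeWitness hn k M₀ N₀ c d ∈ wedge hn hn Ms Ns := by
  have hs : Injective (Fin.castLE (by omega : s ≤ n)) := Fin.castLE_injective _
  have ht : Injective (Fin.castLE (by omega : t ≤ n)) := Fin.castLE_injective _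
  refine ⟨fun i j hi hj => ?_, ?_, ?_⟩
  · simp only [wedgeWitness, Matrix.add_apply]
    rw [embedBlock_apply_of_notMem_range_left _ ?_,
      embedBlock_apply_of_notMem_range_right _ Fin.offset_injective _ ?_,
      embedBlock_apply_of_notMem_range_left _ ?_,
      embedBlock_apply_of_notMem_range_right _ (injective_of_subsingleton _) _ ?_]
    all_goals simp [Fin.range_castLE]; try omega
  · convert hM₀ using 1
    ext a b
    change wedgeWitness hn k M₀ N₀ c d (Fin.offset s hn a) (Fin.castLE (by omega) b) = M₀ a b
    simp only [wedgeWitness, Matrix.add_apply]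
    rw [embedBlock_apply_of_notMem_range_left _ ?_,
      embedBlock_apply_apply _ Fin.offset_injective ht,
      embedBlock_apply_of_notMem_range_left _ ?_,
      embedBlock_apply_of_notMem_range_left _ ?_]
    all_goals simp [Fin.range_castLE, Fin.ext_iff, Fin.offset]; try omega
  · convert hN₀ using 1
    ext a b
    change wedgeWitness hn k M₀ N₀ c d (Fin.castLE (by omega) a) (Fin.offset t (by omega) b) =
      N₀ a b
    simp only [wedgeWitness, Matrix.add_apply]
    rw [embedBlock_apply_apply _ hs Fin.offset_injective,
      embedBlock_apply_of_notMem_range_left _ ?_,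
      embedBlock_apply_of_notMem_range_right _ hs _ ?_,
      embedBlock_apply_of_notMem_range_left _ ?_]
    all_goals simp [Fin.ext_iff, Fin.offset]; try omega

/-- Let n > r > 0, r = s + t, and let M, N be optimal affine
subspaces of t×t and s×s matrices over a field F. Set S := M ∧_{n,n} N, and
F₀ := span(e_{s+1}, …, e_n) (vectors vanishing on the first s coordinates),
G₀ := span(e_{t+1}, …, e_n) (vectors vanishing on the first t coordinates).
If F' and G' are linear subspaces of F^n with XᵀAY = 0 for all X ∈ F', Y ∈ G',
A ∈ S, and dim F' + dim G' = 2n − r, then F' = F₀ and G' = G₀. -/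
theorem stmt_19 (F : Type) [Field F] (n r s t : ℕ) (hrn : r < n)
    (hst : s + t = r)
    (M : AffineSubspace F (Matrix (Fin t) (Fin t) F)) (hM : IsOptimal M)
    (N : AffineSubspace F (Matrix (Fin s) (Fin s) F)) (hN : IsOptimal N)
    (F' G' : Submodule F (Fin n → F))
    (horth : ∀ X ∈ F', ∀ Y ∈ G',
      ∀ A ∈ wedge (F := F) (n := n) (p := n)
        (show s + t ≤ n by omega) (show s + t ≤ n by omega)
        (M : Set (Matrix (Fin t) (Fin t) F)) (N : Set (Matrix (Fin s) (Fin s) F)),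
      X ⬝ᵥ A.mulVec Y = 0)
    (hdim : Module.finrank F F' + Module.finrank F G' = 2 * n - r) :
    (F' : Set (Fin n → F)) = {X : Fin n → F | ∀ i : Fin n, (i : ℕ) < s → X i = 0} ∧
    (G' : Set (Fin n → F)) = {Y : Fin n → F | ∀ i : Fin n, (i : ℕ) < t → Y i = 0} := by
  subst hst
  obtain ⟨⟨M₀, hM₀⟩, hM_unit, -⟩ := hM
  obtain ⟨⟨N₀, hN₀⟩, hN_unit, -⟩ := hN
  have hM₀_unit := hM_unit M₀ hM₀
  have hN₀_unit := hN_unit N₀ hN₀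
  have hn : s + t ≤ n := hrn.le
  let k : Fin n := ⟨s + t, hrn⟩
  have horth' c d : ∀ X ∈ F', ∀ Y ∈ G', X ⬝ᵥ wedgeWitness hn k M₀ N₀ c d *ᵥ Y = 0 :=
    fun X hX Y hY => horth X hX Y hY _ (wedgeWitness_mem_wedge hn le_rfl hM₀ hN₀ c d)
  have hG₀ := vanishingBelow_le_of_dotProduct_wedgeWitness_mulVec_eq_zero hn
    hM₀_unit hN₀_unit le_rfl (horth' · 0) (by omega)
  have hF₀ := vanishingBelow_le_of_dotProduct_wedgeWitness_mulVec_eq_zero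
    ((add_comm t s).trans_le hn) ((isUnit_transpose _).mpr hN₀_unit)
    ((isUnit_transpose _).mpr hM₀_unit) (k := k) (add_comm t s).le (F' := G') (G' := F')
    (fun d Y hY X hX => by
      rw [← transpose_wedgeWitness, dotProduct_transpose_mulVec]
      exact horth' 0 d X hX Y hY)
    (by omega)
  obtain ⟨hF, hG⟩ := Submodule.eq_and_eq_of_le_of_le_of_finrank_add_le hF₀ hG₀
    (by rw [finrank_vanishingBelow, finrank_vanishingBelow]; omega)
  refine ⟨?_, ?_⟩ <;> ext <;> simp [← hF, ← hG, mem_vanishingBelow]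
end
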